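/- arXiv:1403.1429 — 7 statements merged into one kernel-verified Lean document; each statement's English description precedes it below -/
import Mathlib

section
/- Let Λ be an artin algebra and let M and N be finite-length Λ-modules such that M degenerates to N. Then for every submodule M' of M there exists a submodule N' of N such that M' degenerates to N'. -/
universe u v

/-- `M` degenerates to `N` (written `M ≤_deg N` in the paper): there exists a finite-length
`Λ`-module `X` and a short exact sequence `0 → X → M ⊕ X → N → 0` of `Λ`-modules
(a Riedtmann-sequence). -/
def Degenerates (Λ : Type u) [Ring Λ] (M N : Type v) [AddCommGroup M] [Module Λ M]
    [AddCommGroup N] [Module Λ N] : Prop :=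
  ∃ (X : Type v) (_ : AddCommGroup X) (_ : Module Λ X), IsFiniteLength Λ X ∧
    ∃ (f : X →ₗ[Λ] M × X) (g : M × X →ₗ[Λ] N),
      Function.Injective f ∧ Function.Surjective g ∧ LinearMap.range f = LinearMap.ker g

/-- if `Λ` is an artin algebra over a commutative artinian ring `k`, `M` and `N`
are finite-length `Λ`-modules with `M ≤_deg N`, then every submodule `M'` of `M` degenerates to
some submodule `N'` of `N`. -/
theorem degenerates_submodule
    (k : Type u) [CommRing k] [IsArtinianRing k]
    (Λ : Type u) [Ring Λ] [Algebra k Λ] [Module.Finite k Λ]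
    (M N : Type v) [AddCommGroup M] [Module Λ M] [AddCommGroup N] [Module Λ N]
    (hM : IsFiniteLength Λ M) (hN : IsFiniteLength Λ N)
    (hdeg : Degenerates Λ M N) (M' : Submodule Λ M) :
    ∃ N' : Submodule Λ N, Degenerates Λ M' N' := by
  obtain ⟨X, _, _, hX, f, g, hf, hg, hfg⟩ := hdeg
  set φ : X →ₗ[Λ] M := (LinearMap.fst Λ M X).comp f with hφdef
  set ψ : Module.End Λ X := (LinearMap.snd Λ M X).comp f with hψdef
  have hfx : ∀ x, f x = (φ x, ψ x) := fun x => rfl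
  set X' : Submodule Λ X := ⨅ n : ℕ, Submodule.comap (φ ∘ₗ (ψ ^ n : Module.End Λ X)) M'
    with hX'def
  have hmem : ∀ x, x ∈ X' ↔ ∀ n : ℕ, φ ((ψ ^ n : Module.End Λ X) x) ∈ M' := by
    intro x
    simp [hX'def, Submodule.mem_iInf]
  have hφ' : ∀ x ∈ X', φ x ∈ M' := fun x hx => by simpa using (hmem x).1 hx 0
  have hψ' : ∀ x ∈ X', ψ x ∈ X' := by
    intro x hx
    refine (hmem _).2 fun n => ?_
    have := (hmem x).1 hx (n + 1)
    simpa [pow_succ, Module.End.mul_apply] using this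
  -- the restricted maps
  let ι : (M' × X') →ₗ[Λ] M × X := (M'.subtype).prodMap (X'.subtype)
  refine ⟨LinearMap.range (g ∘ₗ ι), X', inferInstance, inferInstance, ?_, ?_⟩
  · obtain ⟨h1, h2⟩ := isFiniteLength_iff_isNoetherian_isArtinian.mp hX
    exact isFiniteLength_iff_isNoetherian_isArtinian.mpr ⟨inferInstance, inferInstance⟩
  · let f' : X' →ₗ[Λ] M' × X' :=
      (LinearMap.codRestrict M' (φ ∘ₗ X'.subtype) fun x => hφ' x x.2).prod
        (LinearMap.codRestrict X' (ψ ∘ₗ X'.subtype) fun x => hψ' x x.2)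
    have hιf' : ∀ x : X', ι (f' x) = f (x : X) := fun x => rfl
    refine ⟨f', (g ∘ₗ ι).rangeRestrict, ?_, LinearMap.surjective_rangeRestrict _, ?_⟩
    · intro a b h
      apply Subtype.ext
      apply hf
      rw [← hιf' a, ← hιf' b, h]
    · ext x'
      constructor
      · rintro ⟨y, rfl⟩
        have : g (ι (f' y)) = 0 := by
          rw [hιf' y]
          have : f (y : X) ∈ LinearMap.ker g := hfg ▸ LinearMap.mem_range_self f (y : X)
          exact this
        exact Subtype.ext (by simpa using this)
      · intro hx
        have hker : ι x' ∈ LinearMap.ker g := by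
          have : ((g ∘ₗ ι).rangeRestrict x' : N) = 0 := congrArg Subtype.val hx
          simpa using this
        rw [← hfg] at hker
        obtain ⟨x, hxeq⟩ := hker
        have hφx : φ x = (x'.1 : M) := congrArg Prod.fst hxeq
        have hψx : ψ x = (x'.2 : X) := congrArg Prod.snd hxeq
        have hxX' : x ∈ X' := by
          refine (hmem x).2 fun n => ?_
          cases n with
          | zero => simpa [hφx] using x'.1.2
          | succ n =>
            have h2 : ψ x ∈ X' := hψx ▸ x'.2.2
            have := (hmem (ψ x)).1 h2 n
            simpa [pow_succ, Module.End.mul_apply] using this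
        refine ⟨⟨x, hxX'⟩, ?_⟩
        apply Prod.ext
        · exact Subtype.ext hφx
        · exact Subtype.ext hψx
end

section
/- Let Λ be an artin algebra, let X and Y be finite-length Λ-modules, and let M be a submodule of X ⊕ Y. Then there exist a submodule X' of X and a submodule Y' of Y such that M degenerates to X' ⊕ Y'. Explicitly, if i : M → X ⊕ Y is the inclusion and p : X ⊕ Y → X the projection onto the first summand, then M degenerates to (im p∘i) ⊕ (ker p∘i). -/
/-!
With `p : M → X` the first coordinate, `0 → ker p → M → im p → 0` is exact, and any short exact
sequence `0 → K → M → B → 0` with `K` of finite length yields the Riedtmann sequence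
`0 → K → M ⊕ K → B ⊕ K → 0`, `k ↦ (f k, 0)`, `(m, k) ↦ (g m, k)`. The elements of `ker p` have
the form `(0, y)`, so the second coordinate embeds `ker p` into `Y`; this makes it of finite
length and identifies it with a submodule of `Y`.
-/

universe u v

namespace Degenerates

variable {Λ : Type u} [Ring Λ] {M : Type v} [AddCommGroup M] [Module Λ M]

lemma of_exact {K B : Type v} [AddCommGroup K] [Module Λ K] [AddCommGroup B] [Module Λ B]
    (hK : IsFiniteLength Λ K) {f : K →ₗ[Λ] M} {g : M →ₗ[Λ] B}
    (hf : Function.Injective f) (hg : Function.Surjective g) (hfg : Function.Exact f g) :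
    Degenerates Λ M (B × K) := by
  refine ⟨K, inferInstance, inferInstance, hK, LinearMap.inl Λ M K ∘ₗ f,
    g.prodMap LinearMap.id, LinearMap.inl_injective.comp hf,
    hg.prodMap Function.surjective_id, ?_⟩
  ext ⟨m, k⟩
  simp [hfg m, eq_comm]

lemma of_linearEquiv {N N' : Type v} [AddCommGroup N] [Module Λ N]
    [AddCommGroup N'] [Module Λ N'] (h : Degenerates Λ M N) (e : N ≃ₗ[Λ] N') :
    Degenerates Λ M N' := by
  obtain ⟨Z, _, _, hZ, f, g, hf, hg, hfg⟩ := h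
  refine ⟨Z, ‹_›, ‹_›, hZ, f, e.toLinearMap ∘ₗ g, hf, e.surjective.comp hg, ?_⟩
  rw [hfg, LinearMap.ker_comp, LinearEquiv.ker, Submodule.comap_bot]

end Degenerates

lemma Submodule.injective_snd_comp_ker_fst {R A B : Type*} [Semiring R] [AddCommMonoid A]
    [Module R A] [AddCommMonoid B] [Module R B] (M : Submodule R (A × B)) :
    Function.Injective (LinearMap.snd R A B ∘ₗ M.subtype ∘ₗ
      (LinearMap.ker (LinearMap.fst R A B ∘ₗ M.subtype)).subtype) := by
  rintro ⟨⟨⟨a, b⟩, hab⟩, ha⟩ ⟨⟨⟨a', b'⟩, hab'⟩, ha'⟩ (h : b = b')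
  simp only [LinearMap.mem_ker, LinearMap.coe_comp, Function.comp_apply, Submodule.coe_subtype,
    LinearMap.fst_apply] at ha ha'
  subst ha ha' h
  rfl

theorem degenerates_submodule_of_prod_general
    (Λ : Type u) [Ring Λ]
    (X Y : Type v) [AddCommGroup X] [Module Λ X] [AddCommGroup Y] [Module Λ Y]
    (hY : IsFiniteLength Λ Y)
    (M : Submodule Λ (X × Y)) :
    (∃ (X' : Submodule Λ X) (Y' : Submodule Λ Y), Degenerates Λ M (X' × Y')) ∧
    Degenerates Λ M
      (↥(LinearMap.range ((LinearMap.fst Λ X Y).comp M.subtype)) ×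
       ↥(LinearMap.ker ((LinearMap.fst Λ X Y).comp M.subtype))) := by
  set p := LinearMap.fst Λ X Y ∘ₗ M.subtype
  have hsnd := M.injective_snd_comp_ker_fst
  have hexact : Function.Exact (LinearMap.ker p).subtype p.rangeRestrict := by
    rw [LinearMap.exact_iff, LinearMap.ker_rangeRestrict, Submodule.range_subtype]
  have hdeg : Degenerates Λ M (LinearMap.range p × LinearMap.ker p) :=
    .of_exact (hY.of_injective hsnd) (LinearMap.ker p).injective_subtype
      p.surjective_rangeRestrict hexact
  exact ⟨⟨_, _, hdeg.of_linearEquiv ((LinearEquiv.refl Λ _).prodCongr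
    (LinearEquiv.ofInjective _ hsnd))⟩, hdeg⟩

/-- if `M` is a submodule of `X ⊕ Y`, then `M` degenerates to `X' ⊕ Y'` for some
submodules `X' ⊆ X`, `Y' ⊆ Y`; explicitly, with `i : M → X ⊕ Y` the inclusion and
`p : X ⊕ Y → X` the first projection, `M` degenerates to `(im p∘i) ⊕ (ker p∘i)`. -/
theorem degenerates_submodule_of_prod
    (k : Type u) [CommRing k] [IsArtinianRing k]
    (Λ : Type u) [Ring Λ] [Algebra k Λ] [Module.Finite k Λ]
    (X Y : Type v) [AddCommGroup X] [Module Λ X] [AddCommGroup Y] [Module Λ Y]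
    (hX : IsFiniteLength Λ X) (hY : IsFiniteLength Λ Y)
    (M : Submodule Λ (X × Y)) :
    (∃ (X' : Submodule Λ X) (Y' : Submodule Λ Y), Degenerates Λ M (X' × Y')) ∧
    Degenerates Λ M
      (↥(LinearMap.range ((LinearMap.fst Λ X Y).comp M.subtype)) ×
       ↥(LinearMap.ker ((LinearMap.fst Λ X Y).comp M.subtype))) :=
  degenerates_submodule_of_prod_general Λ X Y hY M
end

section
/- Let Λ be an artin algebra and let M and N be finite-length Λ-modules such that M virtually degenerates to N. Then for every submodule M' of M there exists a submodule N' of N such that M' virtually degenerates to N'. -/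
universe u v

/-- `M` virtually degenerates to `N`: there exists a finite-length `Λ`-module `Y` such that
`M ⊕ Y` degenerates to `N ⊕ Y`. -/
def VirtuallyDegenerates (Λ : Type u) [Ring Λ] (M N : Type v) [AddCommGroup M] [Module Λ M]
    [AddCommGroup N] [Module Λ N] : Prop :=
  ∃ (Y : Type v) (_ : AddCommGroup Y) (_ : Module Λ Y), IsFiniteLength Λ Y ∧
    Degenerates Λ (M × Y) (N × Y)


/-- A submodule of a finite-length module has finite length. -/
theorem aux_isFiniteLength_submodule {Λ : Type u} [Ring Λ] {W : Type v} [AddCommGroup W]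
    [Module Λ W] (h : IsFiniteLength Λ W) (p : Submodule Λ W) : IsFiniteLength Λ p := by
  obtain ⟨h1, h2⟩ := isFiniteLength_iff_isNoetherian_isArtinian.mp h
  exact isFiniteLength_iff_isNoetherian_isArtinian.mpr ⟨inferInstance, inferInstance⟩

/-- A product of finite-length modules has finite length. -/
theorem aux_isFiniteLength_prod {Λ : Type u} [Ring Λ] {V W : Type v}
    [AddCommGroup V] [Module Λ V] [AddCommGroup W] [Module Λ W]
    (hV : IsFiniteLength Λ V) (hW : IsFiniteLength Λ W) : IsFiniteLength Λ (V × W) := by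
  obtain ⟨h1, h2⟩ := isFiniteLength_iff_isNoetherian_isArtinian.mp hV
  obtain ⟨h3, h4⟩ := isFiniteLength_iff_isNoetherian_isArtinian.mp hW
  exact isFiniteLength_iff_isNoetherian_isArtinian.mpr ⟨inferInstance, inferInstance⟩

/-- if `M ≤_vdeg N` then every submodule `M'` of `M` virtually degenerates to some
submodule `N'` of `N`. -/
theorem virtuallyDegenerates_submodule
    (k : Type u) [CommRing k] [IsArtinianRing k]
    (Λ : Type u) [Ring Λ] [Algebra k Λ] [Module.Finite k Λ]
    (M N : Type v) [AddCommGroup M] [Module Λ M] [AddCommGroup N] [Module Λ N]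
    (hM : IsFiniteLength Λ M) (hN : IsFiniteLength Λ N)
    (hdeg : VirtuallyDegenerates Λ M N) (M' : Submodule Λ M) :
    ∃ N' : Submodule Λ N, VirtuallyDegenerates Λ M' N' := by
  classical
  obtain ⟨Y, _iY1, _iY2, hYfl, X, _iX1, _iX2, hXfl, f, g, hfinj, hgsurj, hfg⟩ := hdeg
  -- the auxiliary map `y ↦ (0, y)`
  let ℓ : Y →ₗ[Λ] N × Y := LinearMap.prod 0 LinearMap.id
  have hℓ : ∀ y : Y, ℓ y = (0, y) := fun y => rfl
  -- the greatest fixed point of the monotone operator Θ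
  let θ : Submodule Λ Y × Submodule Λ X →o Submodule Λ Y × Submodule Λ X :=
    ⟨fun p => ((((M'.prod p.1).prod p.2).map g).comap ℓ, ((M'.prod p.1).prod p.2).comap f),
     by
      intro p q hpq
      have hD : (M'.prod p.1).prod p.2 ≤ (M'.prod q.1).prod q.2 :=
        Submodule.prod_mono (Submodule.prod_mono le_rfl hpq.1) hpq.2
      exact ⟨Submodule.comap_mono (Submodule.map_mono hD), Submodule.comap_mono hD⟩⟩
  obtain ⟨Ybar, Sbar, hYfix, hSfix⟩ :
      ∃ (Ybar : Submodule Λ Y) (Sbar : Submodule Λ X),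
        ((((M'.prod Ybar).prod Sbar).map g).comap ℓ = Ybar) ∧
        (((M'.prod Ybar).prod Sbar).comap f = Sbar) :=
    ⟨θ.gfp.1, θ.gfp.2, congrArg Prod.fst θ.map_gfp, congrArg Prod.snd θ.map_gfp⟩
  set Dbar : Submodule Λ ((M × Y) × X) := (M'.prod Ybar).prod Sbar with hDbar
  set Cbar : Submodule Λ (N × Y) := Dbar.map g with hCbar
  set N₁ : Submodule Λ N := Cbar.map (LinearMap.fst Λ N Y) with hN₁
  set E : Submodule Λ ((M × Y) × X) :=
    Dbar ⊓ Submodule.comap g ((⊥ : Submodule Λ N).prod ⊤) with hEdef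
  -- membership characterizations
  have hmemD : ∀ z : (M × Y) × X, z ∈ Dbar ↔ z.1.1 ∈ M' ∧ z.1.2 ∈ Ybar ∧ z.2 ∈ Sbar := by
    intro z
    rw [hDbar, Submodule.mem_prod, Submodule.mem_prod, and_assoc]
  have hmemE : ∀ z : (M × Y) × X, z ∈ E ↔ z ∈ Dbar ∧ (g z).1 = 0 := by
    intro z
    rw [hEdef, Submodule.mem_inf, Submodule.mem_comap, Submodule.mem_prod]
    simp
  -- g ∘ f = 0
  have hgf0 : ∀ x : X, g (f x) = 0 := by
    intro x
    have hx : f x ∈ LinearMap.ker g := by rw [← hfg]; exact LinearMap.mem_range_self f x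
    simpa using hx
  -- f maps Sbar into E
  have hfE : ∀ σ : X, σ ∈ Sbar → f σ ∈ E := by
    intro σ hσ
    have hD : f σ ∈ Dbar := by rw [← hSfix] at hσ; exact hσ
    exact (hmemE _).mpr ⟨hD, by rw [hgf0]; rfl⟩
  -- Y-part of g of an element of E lies in Ybar
  have hwY : ∀ z : (M × Y) × X, z ∈ E → (g z).2 ∈ Ybar := by
    intro z hz
    obtain ⟨hzD, hz1⟩ := (hmemE z).mp hz
    have hgz : ℓ ((g z).2) ∈ Cbar := by
      have : g z ∈ Cbar := Submodule.mem_map_of_mem hzD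
      rw [hℓ, ← hz1]
      simpa using this
    rw [← hYfix]
    exact hgz
  -- every element of Ybar is realized
  have hYreal : ∀ y : Y, y ∈ Ybar → ∃ d ∈ Dbar, g d = (0, y) := by
    intro y hy
    rw [← hYfix] at hy
    obtain ⟨d, hd, hgd⟩ := hy
    exact ⟨d, hd, by rw [hgd, hℓ]⟩
  -- f maps Sbar into Dbar
  have hfD : ∀ σ : X, σ ∈ Sbar → f σ ∈ Dbar := by
    intro σ hσ; rw [← hSfix] at hσ; exact hσ
  have hED : ∀ z : ↥E, (z : (M × Y) × X) ∈ Dbar := fun z => ((hmemE _).mp z.2).1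
  -- coordinate extractor linear maps
  let eM : ↥E →ₗ[Λ] ↥M' := LinearMap.codRestrict M'
    ((LinearMap.fst Λ M Y).comp ((LinearMap.fst Λ (M × Y) X).comp E.subtype))
    (fun z => ((hmemD _).mp (hED z)).1)
  let eY : ↥E →ₗ[Λ] ↥Ybar := LinearMap.codRestrict Ybar
    ((LinearMap.snd Λ M Y).comp ((LinearMap.fst Λ (M × Y) X).comp E.subtype))
    (fun z => ((hmemD _).mp (hED z)).2.1)
  let eS : ↥E →ₗ[Λ] ↥Sbar := LinearMap.codRestrict Sbar
    ((LinearMap.snd Λ (M × Y) X).comp E.subtype)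
    (fun z => ((hmemD _).mp (hED z)).2.2)
  let fE : ↥Sbar →ₗ[Λ] ↥E := LinearMap.codRestrict E (f.comp Sbar.subtype)
    (fun σ => hfE σ.1 σ.2)
  let qS : ↥Sbar →ₗ[Λ] ↥Sbar := LinearMap.codRestrict Sbar
    ((LinearMap.snd Λ (M × Y) X).comp (f.comp Sbar.subtype))
    (fun σ => ((hmemD _).mp (hfD σ.1 σ.2)).2.2)
  let wE : ↥E →ₗ[Λ] ↥Ybar := LinearMap.codRestrict Ybar
    ((LinearMap.snd Λ N Y).comp (g.comp E.subtype))
    (fun z => hwY z.1 z.2)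
  -- the new Riedtmann maps
  let F : ↥E × ↥Sbar →ₗ[Λ] (↥M' × ↥Ybar) × (↥E × ↥Sbar) :=
    LinearMap.prod
      (LinearMap.prod (eM.comp (LinearMap.fst Λ ↥E ↥Sbar)) (eY.comp (LinearMap.fst Λ ↥E ↥Sbar)))
      (LinearMap.prod (fE.comp (LinearMap.snd Λ ↥E ↥Sbar))
        ((eS.comp (LinearMap.fst Λ ↥E ↥Sbar)) - (qS.comp (LinearMap.snd Λ ↥E ↥Sbar))))
  let ιA : ↥M' × ↥Ybar →ₗ[Λ] M × Y := (M'.subtype).prodMap (Ybar.subtype)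
  let asm : (↥M' × ↥Ybar) × (↥E × ↥Sbar) →ₗ[Λ] (M × Y) × X :=
    LinearMap.prod
      (ιA.comp (LinearMap.fst Λ (↥M' × ↥Ybar) (↥E × ↥Sbar)))
      (Sbar.subtype.comp
        ((eS.comp ((LinearMap.fst Λ ↥E ↥Sbar).comp (LinearMap.snd Λ (↥M' × ↥Ybar) (↥E × ↥Sbar))))
          + ((LinearMap.snd Λ ↥E ↥Sbar).comp (LinearMap.snd Λ (↥M' × ↥Ybar) (↥E × ↥Sbar)))))
  have hasmD : ∀ p : (↥M' × ↥Ybar) × (↥E × ↥Sbar), asm p ∈ Dbar := by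
    intro p
    exact (hmemD _).mpr ⟨p.1.1.2, p.1.2.2, ((eS p.2.1) + p.2.2).2⟩
  let G : (↥M' × ↥Ybar) × (↥E × ↥Sbar) →ₗ[Λ] ↥N₁ × ↥Ybar :=
    LinearMap.prod
      (LinearMap.codRestrict N₁ ((LinearMap.fst Λ N Y).comp (g.comp asm))
        (fun p => ⟨g (asm p), Submodule.mem_map_of_mem (hasmD p), rfl⟩))
      (wE.comp ((LinearMap.fst Λ ↥E ↥Sbar).comp (LinearMap.snd Λ (↥M' × ↥Ybar) (↥E × ↥Sbar))))
  -- injectivity of F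
  have hFinj : Function.Injective F := by
    rintro ⟨ee1, s1⟩ ⟨ee2, s2⟩ hz
    have h3 : f s1.1 = f s2.1 := congrArg (fun w => ((w.2.1 : ↥E) : (M × Y) × X)) hz
    have hs : s1 = s2 := Subtype.ext (hfinj h3)
    have h1 : (ee1 : (M × Y) × X).1.1 = (ee2 : (M × Y) × X).1.1 :=
      congrArg (fun w => ((w.1.1 : ↥M') : M)) hz
    have h2 : (ee1 : (M × Y) × X).1.2 = (ee2 : (M × Y) × X).1.2 :=
      congrArg (fun w => ((w.1.2 : ↥Ybar) : Y)) hz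
    have h4 : (ee1 : (M × Y) × X).2 - (f s1.1).2 = (ee2 : (M × Y) × X).2 - (f s2.1).2 :=
      congrArg (fun w => ((w.2.2 : ↥Sbar) : X)) hz
    rw [h3] at h4
    have h4' : (ee1 : (M × Y) × X).2 = (ee2 : (M × Y) × X).2 := sub_left_inj.mp h4
    have hee : ee1 = ee2 := Subtype.ext (Prod.ext (Prod.ext h1 h2) h4')
    exact Prod.ext hee hs
  -- surjectivity of G
  have hGsurj : Function.Surjective G := by
    rintro ⟨n, y⟩
    obtain ⟨c, hc, hcn⟩ := n.2
    obtain ⟨d, hd, hgd⟩ := hc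
    obtain ⟨d', hd', hgd'⟩ := hYreal y.1 y.2
    have hd'E : d' ∈ E := (hmemE d').mpr ⟨hd', by rw [hgd']⟩
    refine ⟨((⟨d.1.1, ((hmemD d).mp hd).1⟩, ⟨d.1.2, ((hmemD d).mp hd).2.1⟩),
            (⟨d', hd'E⟩, ⟨d.2 - d'.2,
              Sbar.sub_mem ((hmemD d).mp hd).2.2 ((hmemD d').mp hd').2.2⟩)), ?_⟩
    apply Prod.ext
    · apply Subtype.ext
      show (g ((d.1.1, d.1.2), d'.2 + (d.2 - d'.2))).1 = n.1
      have harg : ((d.1.1, d.1.2), d'.2 + (d.2 - d'.2)) = d := by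
        have h5 : d'.2 + (d.2 - d'.2) = d.2 := by abel
        rw [h5]
      rw [harg, hgd]
      exact hcn
    · apply Subtype.ext
      show (g d').2 = y.1
      rw [hgd']
  -- exactness: range F = ker G
  have hrange : LinearMap.range F = LinearMap.ker G := by
    apply le_antisymm
    · rintro w ⟨⟨ee, s⟩, rfl⟩
      rw [LinearMap.mem_ker]
      apply Prod.ext
      · apply Subtype.ext
        show (g (((ee : (M × Y) × X).1.1, (ee : (M × Y) × X).1.2),
            (f s.1).2 + ((ee : (M × Y) × X).2 - (f s.1).2))).1 = 0
        have harg : (((ee : (M × Y) × X).1.1, (ee : (M × Y) × X).1.2),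
            (f s.1).2 + ((ee : (M × Y) × X).2 - (f s.1).2)) = (ee : (M × Y) × X) := by
          have h5 : (f s.1).2 + ((ee : (M × Y) × X).2 - (f s.1).2) = (ee : (M × Y) × X).2 := by
            abel
          rw [h5]
        rw [harg]
        exact ((hmemE _).mp ee.2).2
      · apply Subtype.ext
        show (g (f s.1)).2 = 0
        rw [hgf0]
        rfl
    · rintro ⟨⟨a1, a2⟩, ee, z⟩ hw
      rw [LinearMap.mem_ker] at hw
      have hw1 : (g ((a1.1, a2.1), (ee : (M × Y) × X).2 + z.1)).1 = 0 :=
        congrArg (fun t => ((t.1 : ↥N₁) : N)) hw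
      have hw2 : (g (ee : (M × Y) × X)).2 = 0 :=
        congrArg (fun t => ((t.2 : ↥Ybar) : Y)) hw
      have hgee : g (ee : (M × Y) × X) = 0 := by
        have h1 : (g (ee : (M × Y) × X)).1 = 0 := ((hmemE _).mp ee.2).2
        exact Prod.ext h1 hw2
      have hker : (ee : (M × Y) × X) ∈ LinearMap.range f := by
        rw [hfg]
        exact hgee
      obtain ⟨x, hx⟩ := hker
      have hxS : x ∈ Sbar := by
        rw [← hSfix]
        show f x ∈ Dbar
        rw [hx]
        exact hED ee
      have hARGD : ((a1.1, a2.1), (ee : (M × Y) × X).2 + z.1) ∈ Dbar :=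
        (hmemD _).mpr ⟨a1.2, a2.2, Sbar.add_mem ((hmemD _).mp (hED ee)).2.2 z.2⟩
      have hARGE : ((a1.1, a2.1), (ee : (M × Y) × X).2 + z.1) ∈ E :=
        (hmemE _).mpr ⟨hARGD, hw1⟩
      refine ⟨(⟨((a1.1, a2.1), (ee : (M × Y) × X).2 + z.1), hARGE⟩, ⟨x, hxS⟩), ?_⟩
      apply Prod.ext
      · apply Prod.ext
        · apply Subtype.ext
          show a1.1 = a1.1
          rfl
        · apply Subtype.ext
          show a2.1 = a2.1
          rfl
      · apply Prod.ext
        · apply Subtype.ext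
          show f x = (ee : (M × Y) × X)
          exact hx
        · apply Subtype.ext
          show ((ee : (M × Y) × X).2 + z.1) - (f x).2 = z.1
          rw [hx]
          abel
  -- assembling the result
  exact ⟨N₁, ↥Ybar, inferInstance, inferInstance,
    aux_isFiniteLength_submodule hYfl Ybar,
    ↥E × ↥Sbar, inferInstance, inferInstance,
    aux_isFiniteLength_prod
      (aux_isFiniteLength_submodule
        (aux_isFiniteLength_prod (aux_isFiniteLength_prod hM hYfl) hXfl) E)
      (aux_isFiniteLength_submodule hXfl Sbar),
    F, G, hFinj, hGsurj, hrange⟩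
end

section
/- Let Λ be an artin algebra and let 0 → X → X ⊕ M → N → 0 be a short exact sequence of finite-length Λ-modules, where the first map has components f : X → X and g : X → M, and the second map is denoted π. Let M' be a submodule of M and set X' = { x ∈ X : g(f^n(x)) ∈ M' for all n ≥ 0 }. Then: (a) X' is a submodule of X with f(X') ⊆ X' and g(X') ⊆ M'; (b) the intersection of ker π with X' ⊕ M' equals { (f(x), g(x)) : x ∈ X' }; consequently the restricted sequence 0 → X' → X' ⊕ M' → π(X' ⊕ M') → 0 is exact and M' degenerates to the submodule π(X' ⊕ M') of N. -/
universe u v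

/-- given a short exact sequence `0 → X → X ⊕ M → N → 0` with first map
`x ↦ (f x, g x)` and second map `π`, and a submodule `M' ⊆ M`, the set
`X' = {x ∈ X : g(fⁿ(x)) ∈ M' for all n ≥ 0}` is a submodule of `X` with `f(X') ⊆ X'` and
`g(X') ⊆ M'`; moreover `ker π ∩ (X' ⊕ M') = {(f x, g x) : x ∈ X'}`, the restricted sequence
`0 → X' → X' ⊕ M' → π(X' ⊕ M') → 0` is exact, and `M'` degenerates to the submodule
`π(X' ⊕ M')` of `N`. -/
theorem degenerates_submodule_construction
    (k : Type u) [CommRing k] [IsArtinianRing k]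
    (Λ : Type u) [Ring Λ] [Algebra k Λ] [Module.Finite k Λ]
    (X M N : Type v) [AddCommGroup X] [Module Λ X] [AddCommGroup M] [Module Λ M]
    [AddCommGroup N] [Module Λ N]
    (hX : IsFiniteLength Λ X) (hM : IsFiniteLength Λ M) (hN : IsFiniteLength Λ N)
    (f : X →ₗ[Λ] X) (g : X →ₗ[Λ] M) (π : X × M →ₗ[Λ] N)
    (hinj : Function.Injective (f.prod g)) (hsurj : Function.Surjective π)
    (hexact : LinearMap.range (f.prod g) = LinearMap.ker π)
    (M' : Submodule Λ M) :
    ∃ X' : Submodule Λ X,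
      -- (a) X' is a submodule with the prescribed underlying set, f(X') ⊆ X', g(X') ⊆ M'
      (X' : Set X) = {x : X | ∀ n : ℕ, g ((f ^ n) x) ∈ M'} ∧
      Submodule.map f X' ≤ X' ∧ Submodule.map g X' ≤ M' ∧
      -- (b) ker π ∩ (X' ⊕ M') = {(f x, g x) : x ∈ X'}
      LinearMap.ker π ⊓ Submodule.prod X' M' = Submodule.map (f.prod g) X' ∧
      -- consequently, the restricted sequence 0 → X' → X' ⊕ M' → π(X' ⊕ M') → 0 is exact …
      (∃ hF : ∀ x ∈ X', (f.prod g) x ∈ Submodule.prod X' M',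
        Function.Injective ((f.prod g).restrict hF) ∧
        Function.Surjective (π.restrict
          (fun y hy => Submodule.mem_map_of_mem hy :
            ∀ y ∈ Submodule.prod X' M', π y ∈ Submodule.map π (Submodule.prod X' M'))) ∧
        LinearMap.range ((f.prod g).restrict hF) =
          LinearMap.ker (π.restrict
            (fun y hy => Submodule.mem_map_of_mem hy :
              ∀ y ∈ Submodule.prod X' M', π y ∈ Submodule.map π (Submodule.prod X' M')))) ∧
      -- … and M' degenerates to the submodule π(X' ⊕ M') of N
      Degenerates Λ M' (Submodule.map π (Submodule.prod X' M')) := by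
  set X' : Submodule Λ X := ⨅ n : ℕ, Submodule.comap (g ∘ₗ (f ^ n)) M' with hX'
  have memX' : ∀ x : X, x ∈ X' ↔ ∀ n : ℕ, g ((f ^ n) x) ∈ M' := by
    intro x
    simp [hX', Submodule.mem_iInf, Submodule.mem_comap]
  have hset : (X' : Set X) = {x : X | ∀ n : ℕ, g ((f ^ n) x) ∈ M'} := by
    ext x; exact memX' x
  have hfmap : Submodule.map f X' ≤ X' := by
    rintro _ ⟨x, hx, rfl⟩
    refine (memX' _).mpr fun n => ?_
    have := (memX' x).mp hx (n + 1)
    rwa [pow_succ, Module.End.mul_apply] at this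
  have hgmap : Submodule.map g X' ≤ M' := by
    rintro _ ⟨x, hx, rfl⟩
    have := (memX' x).mp hx 0
    simpa using this
  have hF : ∀ x ∈ X', (f.prod g) x ∈ Submodule.prod X' M' := by
    intro x hx
    exact ⟨hfmap ⟨x, hx, rfl⟩, hgmap ⟨x, hx, rfl⟩⟩
  -- part (b)
  have hb : LinearMap.ker π ⊓ Submodule.prod X' M' = Submodule.map (f.prod g) X' := by
    apply le_antisymm
    · rintro ⟨a, b⟩ ⟨hker, ha, hbm⟩
      have : (a, b) ∈ LinearMap.range (f.prod g) := by rw [hexact]; exact hker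
      obtain ⟨x, hx⟩ := this
      refine ⟨x, (memX' x).mpr fun n => ?_, hx⟩
      cases n with
      | zero =>
        have : g x = b := congrArg Prod.snd hx
        simpa [this] using hbm
      | succ m =>
        have hfx : f x = a := congrArg Prod.fst hx
        have := (memX' a).mp ha m
        rw [pow_succ, Module.End.mul_apply, hfx]
        exact this
    · rintro _ ⟨x, hx, rfl⟩
      refine ⟨?_, hF x hx⟩
      rw [← hexact]
      exact ⟨x, rfl⟩
  refine ⟨X', hset, hfmap, hgmap, hb, ⟨hF, ?_, ?_, ?_⟩, ?_⟩
  · -- injectivity of restricted map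
    intro a b h
    have : (f.prod g) a.1 = (f.prod g) b.1 := congrArg Subtype.val h
    exact Subtype.ext (hinj this)
  · -- surjectivity of restricted π
    rintro ⟨n, ⟨y, hy, rfl⟩⟩
    exact ⟨⟨y, hy⟩, rfl⟩
  · -- exactness in the middle
    ext ⟨y, hy⟩
    constructor
    · rintro ⟨⟨x, hx⟩, h⟩
      have hval : (f.prod g) x = y := congrArg Subtype.val h
      have hker : y ∈ LinearMap.ker π := by rw [← hexact]; exact ⟨x, hval⟩
      simp only [LinearMap.mem_ker]
      exact Subtype.ext (by simpa using hker)
    · intro h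
      have hπ : π y = 0 := by
        have := congrArg Subtype.val (LinearMap.mem_ker.mp h)
        simpa [LinearMap.restrict_apply] using this
      have : y ∈ LinearMap.ker π ⊓ Submodule.prod X' M' := ⟨hπ, hy⟩
      rw [hb] at this
      obtain ⟨x, hx, hxy⟩ := this
      exact ⟨⟨x, hx⟩, Subtype.ext hxy⟩
  · -- Degenerates
    have hNA := isFiniteLength_iff_isNoetherian_isArtinian.mp hX
    have : IsNoetherian Λ X := hNA.1
    have : IsArtinian Λ X := hNA.2
    have hX'fl : IsFiniteLength Λ X' :=
      isFiniteLength_iff_isNoetherian_isArtinian.mpr ⟨inferInstance, inferInstance⟩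
    refine ⟨X', inferInstance, inferInstance, hX'fl, ?_⟩
    -- F : X' → M' × X', x ↦ (g x, f x)
    let F : X' →ₗ[Λ] M' × X' :=
      { toFun := fun x => (⟨g x.1, hgmap ⟨x.1, x.2, rfl⟩⟩, ⟨f x.1, hfmap ⟨x.1, x.2, rfl⟩⟩)
        map_add' := by intro a b; ext <;> simp
        map_smul' := by intro c a; ext <;> simp }
    let G : M' × X' →ₗ[Λ] Submodule.map π (Submodule.prod X' M') :=
      { toFun := fun p => ⟨π (p.2.1, p.1.1), ⟨(p.2.1, p.1.1), ⟨p.2.2, p.1.2⟩, rfl⟩⟩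
        map_add' := by
          intro a b
          exact Subtype.ext (map_add π (a.2.1, a.1.1) (b.2.1, b.1.1))
        map_smul' := by
          intro c a
          exact Subtype.ext (map_smul π c (a.2.1, a.1.1)) }
    refine ⟨F, G, ?_, ?_, ?_⟩
    · intro a b h
      have h1 : g a.1 = g b.1 := congrArg (fun p => (Prod.fst p : M' ) ) h |> congrArg Subtype.val
      have h2 : f a.1 = f b.1 := congrArg (fun p => (Prod.snd p : X') ) h |> congrArg Subtype.val
      exact Subtype.ext (hinj (Prod.ext h2 h1))
    · rintro ⟨n, ⟨x, m⟩, ⟨hxm1, hxm2⟩, rfl⟩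
      exact ⟨(⟨m, hxm2⟩, ⟨x, hxm1⟩), rfl⟩
    · ext ⟨⟨m, hm⟩, ⟨x, hx⟩⟩
      simp only [LinearMap.mem_range, LinearMap.mem_ker]
      constructor
      · rintro ⟨a, ha⟩
        have h1 : g a.1 = m := congrArg (fun p => ((Prod.fst p : M') : M)) ha
        have h2 : f a.1 = x := congrArg (fun p => ((Prod.snd p : X') : X)) ha
        have : π (x, m) = 0 := by
          rw [← h1, ← h2]
          have : (f a.1, g a.1) ∈ LinearMap.ker π := by
            rw [← hexact]; exact ⟨a.1, rfl⟩
          exact this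
        exact Subtype.ext this
      · intro h
        have hπ : π (x, m) = 0 := congrArg Subtype.val h
        have : (x, m) ∈ LinearMap.ker π ⊓ Submodule.prod X' M' := ⟨hπ, hx, hm⟩
        rw [hb] at this
        obtain ⟨a, ha, haxy⟩ := this
        refine ⟨⟨a, ha⟩, ?_⟩
        have h1 : f a = x := congrArg Prod.fst haxy
        have h2 : g a = m := congrArg Prod.snd haxy
        ext <;> simp [F, h1, h2]
end

section
/- Let Λ be a finite-dimensional algebra over a field k (or more generally an artin algebra) and let M and N be finite-length Λ-modules. Then there exists a finite-length Λ-module Z and a short exact sequence of Λ-modules 0 → N → M ⊕ Z → Z → 0 if and only if there exists a finite-length Λ-module X and a short exact sequence of Λ-modules 0 → X → M ⊕ X → N → 0. -/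
/-!
Write the middle maps as `g = [γ δ] : M × Z → Z` and `f = (φ, ψ) : X → M × X`. For large `n`,
Fitting's lemma makes `δ` bijective on `range δⁿ`, and gives `ψ⁻¹(ker ψⁿ) = ker ψⁿ` and
`ker ψⁿ + range ψ = X`; so the first sequence descends to `Z ⧸ range δⁿ` and the second restricts
to `ker ψⁿ`, where `δ`, resp. `ψ`, is nilpotent. Once `δⁿ = 0`, the map
`T : Mⁿ → Z, m ↦ ∑ δⁱ (γ mᵢ)` is onto and `X := ker T` does the job; dually, once `ψⁿ = 0`, the
map `S : X → Mⁿ, x ↦ (φ (ψⁱ x))ᵢ` is injective and `Z := coker S` does the job. In both cases the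
middle term is identified through the cyclic rotation `(a, x) ↦ (x₀, (x₁, …, xₙ₋₁, a))` of
`M × Mⁿ = Mⁿ⁺¹`.
-/

open LinearMap Submodule Function

section

variable {R : Type*} [Ring R]

section ShortExact

variable {A B C : Type*} [AddCommGroup A] [Module R A] [AddCommGroup B]
  [Module R B] [AddCommGroup C] [Module R C]

def IsShortExact (f : A →ₗ[R] B) (g : B →ₗ[R] C) : Prop :=
  Injective f ∧ Surjective g ∧ range f = ker g

variable {f : A →ₗ[R] B} {g : B →ₗ[R] C}

lemma IsShortExact.comp_linearEquiv (h : IsShortExact f g) {A' : Type*} [AddCommGroup A']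
    [Module R A'] (e : A' ≃ₗ[R] A) : IsShortExact (f ∘ₗ e.toLinearMap) g :=
  ⟨h.1.comp e.injective, h.2.1, by rw [range_comp_of_range_eq_top _ e.range, h.2.2]⟩

lemma IsShortExact.linearEquiv_comp (h : IsShortExact f g) {C' : Type*} [AddCommGroup C']
    [Module R C'] (e : C ≃ₗ[R] C') : IsShortExact f (e.toLinearMap ∘ₗ g) :=
  ⟨h.1, e.surjective.comp h.2.1, by rw [LinearEquiv.ker_comp, h.2.2]⟩

end ShortExact

lemma IsFiniteLength.pi {M : Type*} [AddCommGroup M] [Module R M] (hM : IsFiniteLength R M)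
    (ι : Type*) [Finite ι] : IsFiniteLength R (ι → M) := by
  obtain ⟨_, _⟩ := isFiniteLength_iff_isNoetherian_isArtinian.1 hM
  exact isFiniteLength_iff_isNoetherian_isArtinian.2 ⟨inferInstance, inferInstance⟩

variable (R) in
def Fin.snocLinearEquiv (M : Type*) [AddCommGroup M] [Module R M] (n : ℕ) :
    (M × (Fin n → M)) ≃ₗ[R] (Fin (n + 1) → M) where
  __ := Fin.snocEquiv fun _ => M
  map_add' _ _ := funext <| Fin.lastCases (by simp) (by simp)
  map_smul' _ _ := funext <| Fin.lastCases (by simp) (by simp)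

variable (R) in
def Fin.rotateLinearEquiv (M : Type*) [AddCommGroup M] [Module R M] (n : ℕ) :
    (M × (Fin n → M)) ≃ₗ[R] (M × (Fin n → M)) :=
  (Fin.snocLinearEquiv R M n).trans (Fin.consLinearEquiv R fun _ => M).symm

lemma Fin.rotateLinearEquiv_apply {M : Type*} [AddCommGroup M] [Module R M] {n : ℕ} (a : M)
    (x : Fin n → M) :
    Fin.rotateLinearEquiv R M n (a, x) =
      ((Fin.snoc x a : Fin (n + 1) → M) 0, Fin.tail (Fin.snoc x a : Fin (n + 1) → M)) := rfl

section Reach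

variable {M Z : Type*} [AddCommGroup M] [Module R M] [AddCommGroup Z] [Module R Z]
  (γ : M →ₗ[R] Z) (δ : Module.End R Z)

def reachMap (n : ℕ) : (Fin n → M) →ₗ[R] Z :=
  ∑ i : Fin n, (δ ^ (i : ℕ)) ∘ₗ γ ∘ₗ LinearMap.proj (φ := fun _ => M) i

@[simp]
lemma reachMap_apply (n : ℕ) (m : Fin n → M) :
    reachMap γ δ n m = ∑ i : Fin n, (δ ^ (i : ℕ)) (γ (m i)) := by
  simp [reachMap]

lemma reachMap_succ (n : ℕ) (m : Fin (n + 1) → M) :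
    reachMap γ δ (n + 1) m = γ (m 0) + δ (reachMap γ δ n (Fin.tail m)) := by
  simp [Fin.sum_univ_succ, map_sum, pow_succ', Fin.tail]

lemma reachMap_snoc (n : ℕ) (m : Fin n → M) (a : M) :
    reachMap γ δ (n + 1) (Fin.snoc m a) = reachMap γ δ n m + (δ ^ n) (γ a) := by
  simp [Fin.sum_univ_castSucc]

lemma coprod_comp_prodMap_reachMap_rotate (n : ℕ) :
    coprod γ δ ∘ₗ prodMap id (reachMap γ δ n) ∘ₗ (Fin.rotateLinearEquiv R M n).toLinearMap =
      coprod ((δ ^ n) ∘ₗ γ) (reachMap γ δ n) := by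
  refine LinearMap.ext fun ⟨a, m⟩ => ?_
  simp only [LinearMap.comp_apply, LinearEquiv.coe_coe, Fin.rotateLinearEquiv_apply, prodMap_apply,
    id_apply, coprod_apply]
  rw [← reachMap_succ, reachMap_snoc, add_comm]

lemma codisjoint_range_reachMap_range_pow (hg : Surjective (coprod γ δ)) (n : ℕ) :
    Codisjoint (range (reachMap γ δ n)) (range (δ ^ n)) := by
  induction n with
  | zero => simp [Module.End.one_eq_id]
  | succ n ih =>
    refine codisjoint_iff_exists_add_eq.2 fun z => ?_
    obtain ⟨⟨a, w⟩, rfl⟩ := hg z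
    obtain ⟨_, _, ⟨m, rfl⟩, ⟨w', rfl⟩, rfl⟩ := codisjoint_iff_exists_add_eq.1 ih w
    refine ⟨_, _, mem_range_self _ (Fin.cons a m), mem_range_self _ w', ?_⟩
    simp only [reachMap_succ, Fin.cons_zero, Fin.tail_cons, coprod_apply, map_add, pow_succ',
      Module.End.mul_apply, add_assoc]

lemma reachMap_surjective (hg : Surjective (coprod γ δ)) {n : ℕ} (hδ : δ ^ n = 0) :
    Surjective (reachMap γ δ n) :=
  range_eq_top.1 <| by simpa [hδ] using codisjoint_range_reachMap_range_pow γ δ hg n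

end Reach

section Observe

variable {M X : Type*} [AddCommGroup M] [Module R M] [AddCommGroup X] [Module R X]
  (φ : X →ₗ[R] M) (ψ : Module.End R X)

def observeMap (n : ℕ) : X →ₗ[R] Fin n → M :=
  LinearMap.pi fun i => φ ∘ₗ ψ ^ (i : ℕ)

@[simp]
lemma observeMap_apply (n : ℕ) (x : X) (i : Fin n) :
    observeMap φ ψ n x i = φ ((ψ ^ (i : ℕ)) x) := rfl

lemma observeMap_succ (n : ℕ) (x : X) :
    observeMap φ ψ (n + 1) x = Fin.cons (φ x) (observeMap φ ψ n (ψ x)) := by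
  ext i
  refine Fin.cases ?_ (fun i => ?_) i <;> simp [pow_succ]

lemma observeMap_succ_eq_snoc (n : ℕ) (x : X) :
    observeMap φ ψ (n + 1) x = Fin.snoc (observeMap φ ψ n x) (φ ((ψ ^ n) x)) := by
  ext i
  refine Fin.lastCases ?_ (fun i => ?_) i <;> simp

lemma rotate_comp_prod_observeMap (n : ℕ) :
    (Fin.rotateLinearEquiv R M n).toLinearMap ∘ₗ (φ ∘ₗ ψ ^ n).prod (observeMap φ ψ n) =
      prodMap id (observeMap φ ψ n) ∘ₗ φ.prod ψ := by
  ext x : 1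
  change Fin.rotateLinearEquiv R M n (φ ((ψ ^ n) x), observeMap φ ψ n x) =
    (φ x, observeMap φ ψ n (ψ x))
  rw [Fin.rotateLinearEquiv_apply, ← observeMap_succ_eq_snoc, observeMap_succ]
  rfl

lemma disjoint_ker_observeMap_ker_pow (hf : Injective (φ.prod ψ)) (n : ℕ) :
    Disjoint (ker (observeMap φ ψ n)) (ker (ψ ^ n)) := by
  induction n with
  | zero => simp [Module.End.one_eq_id]
  | succ n ih =>
    refine disjoint_def.2 fun x hSx hψx => hf ?_
    rw [mem_ker, observeMap_succ] at hSx
    have hψ : ψ x = 0 := disjoint_def.1 ih (ψ x) (congrArg Fin.tail hSx)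
      (by rwa [mem_ker, ← Module.End.mul_apply, ← pow_succ])
    simpa [hψ] using congrFun hSx 0

lemma observeMap_injective (hf : Injective (φ.prod ψ)) {n : ℕ} (hψ : ψ ^ n = 0) :
    Injective (observeMap φ ψ n) :=
  ker_eq_bot.1 <| by simpa [hψ] using disjoint_ker_observeMap_ker_pow φ ψ hf n

end Observe

section Constructions

variable {M Z P : Type*} [AddCommGroup M] [Module R M] [AddCommGroup Z] [Module R Z]
  [AddCommGroup P] [Module R P]

theorem exists_isShortExact_ker (T : P →ₗ[R] Z) (hT : Surjective T) (g : M × Z →ₗ[R] Z)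
    (e : (M × P) ≃ₗ[R] (M × P)) (he : g ∘ₗ prodMap id T ∘ₗ e.toLinearMap = T ∘ₗ snd R M P) :
    ∃ (f₁ : ker T →ₗ[R] M × ker T) (g₁ : M × ker T →ₗ[R] ker g), IsShortExact f₁ g₁ := by
  have he' (p : M × P) : g (prodMap id T (e p)) = T p.2 := LinearMap.congr_fun he p
  have hf₁ (x) (hx : x ∈ ker T) : (e.symm (0, x)).2 ∈ ker T := by
    rw [mem_ker, ← he', e.apply_symm_apply]
    simp only [prodMap_apply, mem_ker.1 hx, Prod.mk_zero_zero, map_zero]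
  have hg₁ (q : M × ker T) : prodMap id T (e (q.1, q.2)) ∈ ker g := by
    rw [mem_ker, he']
    exact q.2.2
  let ι : M × ker T →ₗ[R] M × P := prodMap id (ker T).subtype
  have hι : Injective ι := Prod.map_injective.2 ⟨injective_id, Subtype.val_injective⟩
  let f₁ : ker T →ₗ[R] M × ker T :=
    (fst R M P ∘ₗ e.symm.toLinearMap ∘ₗ inr R M P ∘ₗ (ker T).subtype).prod
      ((snd R M P ∘ₗ e.symm.toLinearMap ∘ₗ inr R M P).restrict hf₁)
  have hιf₁ (x : ker T) : ι (f₁ x) = e.symm (0, x) := rfl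
  let g₁ : M × ker T →ₗ[R] ker g := (prodMap id T ∘ₗ e.toLinearMap ∘ₗ ι).codRestrict (ker g) hg₁
  have hg₁ι (q : M × ker T) : (g₁ q : M × Z) = prodMap id T (e (ι q)) := rfl
  refine ⟨f₁, g₁, fun x y hxy => ?_, fun z => ?_, ?_⟩
  · simpa [hιf₁] using congrArg ι hxy
  · obtain ⟨⟨m, z⟩, hz⟩ := z
    obtain ⟨y, rfl⟩ := hT z
    have hy : (e.symm (m, y)).2 ∈ ker T := by
      rw [mem_ker, ← he', e.apply_symm_apply]
      exact hz
    exact ⟨((e.symm (m, y)).1, ⟨_, hy⟩), Subtype.ext <| by simp [hg₁ι, ι]⟩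
  · ext q
    constructor
    · rintro ⟨x, rfl⟩
      rw [mem_ker, ← Subtype.coe_inj, hg₁ι, hιf₁, e.apply_symm_apply]
      simp [mem_ker.1 x.2]
    · intro hq
      rw [mem_ker, ← Subtype.coe_inj, hg₁ι] at hq
      have hp : e (ι q) = (0, (e (ι q)).2) := Prod.ext (by simpa using congrArg Prod.fst hq) rfl
      refine ⟨⟨(e (ι q)).2, by simpa using congrArg Prod.snd hq⟩, hι ?_⟩
      rw [hιf₁, ← hp, e.symm_apply_apply]

lemma ker_prodMap_mkQ_comp_symm_comp_prodMap_eq_range {X : Type*} [AddCommGroup X]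
    [Module R X] (S : X →ₗ[R] P) (hS : Injective S) (f : X →ₗ[R] M × X)
    (e : (M × P) ≃ₗ[R] (M × P)) (he : e.toLinearMap ∘ₗ inr R M P ∘ₗ S = prodMap id S ∘ₗ f) :
    ker (prodMap id (range S).mkQ ∘ₗ e.symm.toLinearMap ∘ₗ prodMap id S) = range f := by
  have he' (x : X) : e (0, S x) = ((f x).1, S (f x).2) := LinearMap.congr_fun he x
  refine le_antisymm ?_ ?_
  · rintro ⟨m, x⟩ hmx
    rw [mem_ker, Prod.ext_iff] at hmx
    obtain ⟨x', hx'⟩ := (Submodule.Quotient.mk_eq_zero _).1 hmx.2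
    have hmx' : (m, S x) = ((f x').1, S (f x').2) := by
      rw [← he', hx', ← show (e.symm (m, S x)).1 = 0 from hmx.1]
      exact (e.apply_symm_apply _).symm
    obtain ⟨rfl, hx⟩ := Prod.mk.inj hmx'
    exact ⟨x', Prod.ext rfl (hS hx).symm⟩
  · rintro _ ⟨x, rfl⟩
    simp [mem_ker, ← he']

theorem exists_isShortExact_coker {X : Type*} [AddCommGroup X] [Module R X] (S : X →ₗ[R] P)
    (hS : Injective S) (f : X →ₗ[R] M × X) (e : (M × P) ≃ₗ[R] (M × P))
    (he : e.toLinearMap ∘ₗ inr R M P ∘ₗ S = prodMap id S ∘ₗ f) :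
    ∃ (f₂ : (M × X) ⧸ range f →ₗ[R] M × (P ⧸ range S)) (g₂ : M × (P ⧸ range S) →ₗ[R] P ⧸ range S),
      IsShortExact f₂ g₂ := by
  have hker := ker_prodMap_mkQ_comp_symm_comp_prodMap_eq_range S hS f e he
  set W := range S
  have hW : W ≤ W.comap (snd R M P ∘ₗ e.toLinearMap ∘ₗ inr R M P) := by
    rintro _ ⟨x, rfl⟩
    have hx : e (0, S x) = ((f x).1, S (f x).2) := LinearMap.congr_fun he x
    exact ⟨(f x).2, by simp [hx]⟩
  let g₂ : M × (P ⧸ W) →ₗ[R] P ⧸ W :=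
    coprod (W.mkQ ∘ₗ snd R M P ∘ₗ e.toLinearMap ∘ₗ inl R M P) (W.mapQ W _ hW)
  have hg₂ (p : M × P) : g₂ (prodMap id W.mkQ p) = W.mkQ (e p).2 := by
    simp [g₂, ← Submodule.Quotient.mk_add, ← Prod.snd_add, ← map_add]
  let f₂ := (range f).liftQ _ hker.ge
  have hf₂ (m : M) (x : X) :
      f₂ (Submodule.Quotient.mk (m, x)) = prodMap id W.mkQ (e.symm (m, S x)) := rfl
  refine ⟨f₂, g₂, ker_eq_bot.1 (ker_liftQ_eq_bot _ _ _ hker.le), fun q => ?_,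
    le_antisymm ?_ fun ⟨a, q⟩ hq => ?_⟩
  · obtain ⟨y, rfl⟩ := W.mkQ_surjective q
    exact ⟨prodMap id W.mkQ (e.symm (0, y)), by rw [hg₂, e.apply_symm_apply]⟩
  · rintro _ ⟨q, rfl⟩
    obtain ⟨⟨m, x⟩, rfl⟩ := Submodule.Quotient.mk_surjective _ q
    rw [mem_ker, hf₂, hg₂, e.apply_symm_apply]
    exact (Submodule.Quotient.mk_eq_zero _).2 ⟨x, rfl⟩
  · obtain ⟨y, rfl⟩ := W.mkQ_surjective q
    obtain ⟨x, hx⟩ := (Submodule.Quotient.mk_eq_zero W).1 ((hg₂ (a, y)).symm.trans hq)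
    refine ⟨Submodule.Quotient.mk ((e (a, y)).1, x), ?_⟩
    rw [hf₂, hx, Prod.mk.eta, e.symm_apply_apply]
    rfl

end Constructions

section Reductions

variable {M N Z X : Type*} [AddCommGroup M] [Module R M] [AddCommGroup N] [Module R N]
  [AddCommGroup Z] [Module R Z] [AddCommGroup X] [Module R X]

theorem IsShortExact.prodMap_mkQ {f : N →ₗ[R] M × Z} {γ : M →ₗ[R] Z} {δ : Module.End R Z}
    (h : IsShortExact f (coprod γ δ)) {I : Submodule R Z} (hδI : I ≤ I.comap δ)
    (hIδ : I ≤ I.map δ) (hdisj : Disjoint (ker δ) I) :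
    IsShortExact (prodMap id I.mkQ ∘ₗ f) (coprod (I.mkQ ∘ₗ γ) (I.mapQ I δ hδI)) := by
  obtain ⟨hf, hg, hfg⟩ := h
  have hcomm (m : M) (z : Z) :
      coprod (I.mkQ ∘ₗ γ) (I.mapQ I δ hδI) (m, I.mkQ z) = I.mkQ (coprod γ δ (m, z)) := by
    simp
  have hfker (ν : N) : coprod γ δ (f ν) = 0 := by
    rw [← mem_ker, ← hfg]
    exact mem_range_self f ν
  refine ⟨(injective_iff_map_eq_zero _).2 fun ν hν => ?_, fun q => ?_, ?_⟩
  · have h1 : (f ν).1 = 0 := congrArg Prod.fst hν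
    have h2 : (f ν).2 ∈ I := (Submodule.Quotient.mk_eq_zero I).1 (congrArg Prod.snd hν)
    have h2' : (f ν).2 ∈ ker δ := by simpa [h1] using hfker ν
    exact hf (by rw [map_zero]; exact Prod.ext h1 (disjoint_def.1 hdisj _ h2' h2))
  · obtain ⟨z, rfl⟩ := I.mkQ_surjective q
    obtain ⟨⟨m, w⟩, rfl⟩ := hg z
    exact ⟨(m, I.mkQ w), hcomm m w⟩
  · refine le_antisymm ?_ fun ⟨m, q⟩ hmq => ?_
    · rintro _ ⟨ν, rfl⟩
      rw [mem_ker, LinearMap.comp_apply, prodMap_apply, id_apply, hcomm, Prod.mk.eta, hfker,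
        map_zero]
    · obtain ⟨z, rfl⟩ := I.mkQ_surjective q
      rw [mem_ker, hcomm, ← mem_ker, ker_mkQ] at hmq
      obtain ⟨w, hw, hδw⟩ := hIδ hmq
      obtain ⟨ν, hν⟩ : (m, z - w) ∈ range f := by
        rw [hfg, mem_ker, coprod_apply, map_sub, hδw, coprod_apply]
        abel
      refine ⟨ν, ?_⟩
      rw [LinearMap.comp_apply, hν, prodMap_apply, id_apply, map_sub,
        (I.mkQ_apply w).trans ((Submodule.Quotient.mk_eq_zero I).2 hw), sub_zero]

theorem IsShortExact.prod_restrict {φ : X →ₗ[R] M} {ψ : Module.End R X} {g : M × X →ₗ[R] N}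
    (h : IsShortExact (φ.prod ψ) g) {K : Submodule R X} (hKψ : K ≤ K.comap ψ)
    (hψK : K.comap ψ ≤ K) (hcod : Codisjoint K (range ψ)) :
    IsShortExact ((φ ∘ₗ K.subtype).prod (ψ.restrict hKψ)) (g ∘ₗ prodMap id K.subtype) := by
  obtain ⟨hf, hg, hfg⟩ := h
  have hfker (x : X) : g (φ x, ψ x) = 0 := by
    rw [← mem_ker, ← hfg]
    exact mem_range_self _ x
  refine ⟨fun x y hxy => Subtype.ext (hf ?_), fun ν => ?_, ?_⟩
  · simpa [Prod.ext_iff, Subtype.ext_iff] using hxy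
  · obtain ⟨⟨m, x⟩, rfl⟩ := hg ν
    obtain ⟨k, _, hk, ⟨y, rfl⟩, rfl⟩ := codisjoint_iff_exists_add_eq.1 hcod x
    refine ⟨(m - φ y, ⟨k, hk⟩), ?_⟩
    rw [LinearMap.comp_apply, prodMap_apply, id_apply, subtype_apply, ← sub_zero (g (m, _)),
      ← hfker y, ← map_sub, Prod.mk_sub_mk, add_sub_cancel_right]
  · refine le_antisymm ?_ fun ⟨m, k⟩ hmk => ?_
    · rintro _ ⟨x, rfl⟩
      exact hfker x
    · obtain ⟨y, hy⟩ : (m, (k : X)) ∈ range (φ.prod ψ) := by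
        rw [hfg]
        exact hmk
      obtain ⟨rfl, hψy⟩ := Prod.mk.inj hy
      exact ⟨⟨y, hψK (show ψ y ∈ K from hψy ▸ k.2)⟩, Prod.ext rfl (Subtype.ext hψy)⟩

end Reductions

section Fitting

variable {Z : Type*} [AddCommGroup Z] [Module R Z] [IsNoetherian R Z] [IsArtinian R Z]

lemma exists_disjoint_ker_range_pow_and_range_pow_succ_eq (δ : Module.End R Z) :
    ∃ n, Disjoint (ker δ) (range (δ ^ n)) ∧ range (δ ^ (n + 1)) = range (δ ^ n) := by
  obtain ⟨N, hN⟩ := (δ.eventually_disjoint_ker_pow_range_pow.and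
    δ.eventually_iInf_range_pow_eq).exists_forall_of_atTop
  refine ⟨N + 1, (hN (N + 1) (by omega)).1.mono_left ?_,
    (hN (N + 2) (by omega)).2.symm.trans (hN (N + 1) (by omega)).2⟩
  rw [pow_succ, Module.End.mul_eq_comp]
  exact ker_le_ker_comp δ _

lemma exists_codisjoint_ker_pow_range_and_ker_pow_succ_eq (ψ : Module.End R Z) :
    ∃ n, Codisjoint (ker (ψ ^ n)) (range ψ) ∧ ker (ψ ^ (n + 1)) = ker (ψ ^ n) := by
  obtain ⟨N, hN⟩ := (ψ.eventually_codisjoint_ker_pow_range_pow.and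
    ψ.eventually_iSup_ker_pow_eq).exists_forall_of_atTop
  refine ⟨N + 1, (hN (N + 1) (by omega)).1.mono_right ?_,
    (hN (N + 2) (by omega)).2.symm.trans (hN (N + 1) (by omega)).2⟩
  rw [pow_succ', Module.End.mul_eq_comp]
  exact range_comp_le_range _ ψ

end Fitting

section Sequences

variable (R) (M N : Type v) [AddCommGroup M] [Module R M] [AddCommGroup N] [Module R N]

def HasRiedtmannSequence : Prop :=
  ∃ (X : Type v) (_ : AddCommGroup X) (_ : Module R X), IsFiniteLength R X ∧
    ∃ (f : X →ₗ[R] M × X) (g : M × X →ₗ[R] N), IsShortExact f g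

def HasDualRiedtmannSequence : Prop :=
  ∃ (Z : Type v) (_ : AddCommGroup Z) (_ : Module R Z), IsFiniteLength R Z ∧
    ∃ (f : N →ₗ[R] M × Z) (g : M × Z →ₗ[R] Z), IsShortExact f g

variable {R M N}

theorem hasRiedtmannSequence_of_pow_eq_zero (hM : IsFiniteLength R M) {Z : Type*}
    [AddCommGroup Z] [Module R Z] {f : N →ₗ[R] M × Z} {γ : M →ₗ[R] Z} {δ : Module.End R Z}
    (h : IsShortExact f (coprod γ δ)) {n : ℕ} (hδ : δ ^ n = 0) : HasRiedtmannSequence R M N := by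
  have he : coprod γ δ ∘ₗ prodMap id (reachMap γ δ n) ∘ₗ (Fin.rotateLinearEquiv R M n).toLinearMap =
      reachMap γ δ n ∘ₗ snd R M _ := by
    rw [coprod_comp_prodMap_reachMap_rotate, hδ, zero_comp, coprod_zero_left]
  obtain ⟨f₁, g₁, h₁⟩ := exists_isShortExact_ker _ (reachMap_surjective γ δ h.2.1 hδ) _ _ he
  let ρ : N ≃ₗ[R] ker (coprod γ δ) :=
    (LinearEquiv.ofInjective f h.1).trans (LinearEquiv.ofEq _ _ h.2.2)
  exact ⟨_, _, _, (hM.pi _).of_injective (ker _).injective_subtype, f₁, _,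
    h₁.linearEquiv_comp ρ.symm⟩

theorem hasDualRiedtmannSequence_of_pow_eq_zero (hM : IsFiniteLength R M) {X : Type*}
    [AddCommGroup X] [Module R X] {φ : X →ₗ[R] M} {ψ : Module.End R X} {g : M × X →ₗ[R] N}
    (h : IsShortExact (φ.prod ψ) g) {n : ℕ} (hψ : ψ ^ n = 0) :
    HasDualRiedtmannSequence R M N := by
  have he : (Fin.rotateLinearEquiv R M n).toLinearMap ∘ₗ inr R M _ ∘ₗ observeMap φ ψ n =
      prodMap id (observeMap φ ψ n) ∘ₗ φ.prod ψ := by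
    rw [← rotate_comp_prod_observeMap, hψ, comp_zero]
    rfl
  obtain ⟨f₂, g₂, h₂⟩ := exists_isShortExact_coker _ (observeMap_injective φ ψ h.1 hψ) _ _ he
  let ρ : ((M × X) ⧸ range (φ.prod ψ)) ≃ₗ[R] N :=
    (exact_iff.2 h.2.2.symm).linearEquivOfSurjective h.2.1
  exact ⟨_, _, _, (hM.pi _).of_surjective (mkQ_surjective _), _, g₂,
    h₂.comp_linearEquiv ρ.symm⟩

theorem HasDualRiedtmannSequence.hasRiedtmannSequence (hM : IsFiniteLength R M)
    (h : HasDualRiedtmannSequence R M N) : HasRiedtmannSequence R M N := by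
  obtain ⟨Z, _, _, hZ, f, g, h⟩ := h
  obtain ⟨_, _⟩ := isFiniteLength_iff_isNoetherian_isArtinian.1 hZ
  rw [← coprod_comp_inl_inr g] at h
  set δ := g ∘ₗ inr R M Z
  obtain ⟨n, hdisj, hrange⟩ := exists_disjoint_ker_range_pow_and_range_pow_succ_eq δ
  have hmap : (range (δ ^ n)).map δ = range (δ ^ n) := by
    rw [← range_comp, ← Module.End.mul_eq_comp, ← pow_succ', hrange]
  refine hasRiedtmannSequence_of_pow_eq_zero hM
    (h.prodMap_mkQ (map_le_iff_le_comap.1 hmap.le) hmap.ge hdisj) (n := n) ?_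
  rw [← mapQ_pow]
  ext z
  simp

theorem HasRiedtmannSequence.hasDualRiedtmannSequence (hM : IsFiniteLength R M)
    (h : HasRiedtmannSequence R M N) : HasDualRiedtmannSequence R M N := by
  obtain ⟨X, _, _, hX, f, g, h⟩ := h
  obtain ⟨_, _⟩ := isFiniteLength_iff_isNoetherian_isArtinian.1 hX
  rw [show f = (fst R M X ∘ₗ f).prod (snd R M X ∘ₗ f) from LinearMap.ext fun _ => rfl] at h
  set ψ := snd R M X ∘ₗ f
  obtain ⟨n, hcod, hker⟩ := exists_codisjoint_ker_pow_range_and_ker_pow_succ_eq ψ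
  have hcomap : (ker (ψ ^ n)).comap ψ = ker (ψ ^ n) := by
    rw [← ker_comp, ← Module.End.mul_eq_comp, ← pow_succ, hker]
  refine hasDualRiedtmannSequence_of_pow_eq_zero hM (h.prod_restrict hcomap.ge hcomap.le hcod)
    (n := n) ?_
  rw [Module.End.pow_restrict]
  ext x
  simp

end Sequences

end

theorem riedtmann_sequences_equivalent_general
    (Λ : Type u) [Ring Λ]
    (M N : Type v) [AddCommGroup M] [Module Λ M] [AddCommGroup N] [Module Λ N]
    (hM : IsFiniteLength Λ M) :
    (∃ (Z : Type v) (_ : AddCommGroup Z) (_ : Module Λ Z), IsFiniteLength Λ Z ∧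
      ∃ (f : N →ₗ[Λ] M × Z) (g : M × Z →ₗ[Λ] Z),
        Function.Injective f ∧ Function.Surjective g ∧ LinearMap.range f = LinearMap.ker g) ↔
    (∃ (X : Type v) (_ : AddCommGroup X) (_ : Module Λ X), IsFiniteLength Λ X ∧
      ∃ (f : X →ₗ[Λ] M × X) (g : M × X →ₗ[Λ] N),
        Function.Injective f ∧ Function.Surjective g ∧ LinearMap.range f = LinearMap.ker g) :=
  ⟨HasDualRiedtmannSequence.hasRiedtmannSequence hM,
    HasRiedtmannSequence.hasDualRiedtmannSequence hM⟩

/-- Riedtmann–Zwara: for finite-length modules `M`, `N` over an artin algebra `Λ`,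
there is a short exact sequence `0 → N → M ⊕ Z → Z → 0` with `Z` of finite length if and only if
there is a short exact sequence `0 → X → M ⊕ X → N → 0` with `X` of finite length. -/
theorem riedtmann_sequences_equivalent
    (k : Type u) [CommRing k] [IsArtinianRing k]
    (Λ : Type u) [Ring Λ] [Algebra k Λ] [Module.Finite k Λ]
    (M N : Type v) [AddCommGroup M] [Module Λ M] [AddCommGroup N] [Module Λ N]
    (hM : IsFiniteLength Λ M) (hN : IsFiniteLength Λ N) :
    (∃ (Z : Type v) (_ : AddCommGroup Z) (_ : Module Λ Z), IsFiniteLength Λ Z ∧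
      ∃ (f : N →ₗ[Λ] M × Z) (g : M × Z →ₗ[Λ] Z),
        Function.Injective f ∧ Function.Surjective g ∧ LinearMap.range f = LinearMap.ker g) ↔
    (∃ (X : Type v) (_ : AddCommGroup X) (_ : Module Λ X), IsFiniteLength Λ X ∧
      ∃ (f : X →ₗ[Λ] M × X) (g : M × X →ₗ[Λ] N),
        Function.Injective f ∧ Function.Surjective g ∧ LinearMap.range f = LinearMap.ker g) :=
  riedtmann_sequences_equivalent_general Λ M N hM
end

section
/- Let k be an algebraically closed field, Λ a basic finite-dimensional k-algebra, and let M and N be d-dimensional Λ-modules. Suppose there exist composition series (0) = M_0 ⊆ M_1 ⊆ ⋯ ⊆ M_d = M and (0) = N_0 ⊆ N_1 ⊆ ⋯ ⊆ N_d = N such that M_i/M_{i-1} ≅ N_i/N_{i-1} for all 1 ≤ i ≤ d. Then for any orthogonal set E of idempotents in Λ, there exist triangular representations μ and ν of M and N respectively such that μ(e) = ν(e) for all e ∈ E. -/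
universe u

/-- A set of idempotents of `Λ` which is orthogonal: any two distinct members multiply to `0`. -/
def IsOrthogonalIdempotentSet (Λ : Type u) [Ring Λ] (E : Set Λ) : Prop :=
  (∀ e ∈ E, IsIdempotentElem e) ∧ ∀ e ∈ E, ∀ f ∈ E, e ≠ f → e * f = 0

/-- A representation `ρ : Λ → M_d(k)` represents the module `M` if `k^d` with the `Λ`-action
`l • v := ρ(l) * v` is isomorphic to `M`, i.e. there is a `k`-linear equivalence
`k^d ≃ M` intertwining the actions. -/
def Represents {k : Type u} [Field k] {Λ : Type u} [Ring Λ] [Algebra k Λ] {d : ℕ}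
    (ρ : Λ →ₐ[k] Matrix (Fin d) (Fin d) k)
    (M : Type u) [AddCommGroup M] [Module k M] [Module Λ M] [IsScalarTower k Λ M] : Prop :=
  ∃ e : (Fin d → k) ≃ₗ[k] M, ∀ (l : Λ) (v : Fin d → k), e ((ρ l).mulVec v) = l • e v

/-- The subquotient `P / Q` of a module given by two submodules. -/
abbrev SubQuot {Λ : Type u} [Ring Λ] {M : Type u} [AddCommGroup M] [Module Λ M]
    (P Q : Submodule Λ M) : Type u :=
  P ⧸ Submodule.comap P.subtype Q

/-!
Since `Λ` is basic, every composition factor is one-dimensional, so `Λ` acts on the `i`-th factor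
of `M`, and on the isomorphic `i`-th factor of `N`, through one character `χ i : Λ → k`. In each
step `M_{i+1}` of the series choose a vector `v i ∉ M_i` on which every `e ∈ E` acts by the scalar
`χ i e`: it is `e₀ • x` if `χ i e₀ = 1` for some `e₀ ∈ E`, and otherwise `x - ∑ e • x`, a finite
sum because the nonzero `e • x` are linearly independent. The vectors `v i` form a basis in which
`Λ` acts by upper triangular matrices and each `e ∈ E` by `diag (χ i e)`, which depends only on
the characters and is therefore the same for `M` and `N`.
-/

open Module

section Character

variable {k Λ S T : Type*} [Field k] [Ring Λ] [Algebra k Λ]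
  [AddCommGroup S] [Module k S] [Module Λ S] [IsScalarTower k Λ S]
  [AddCommGroup T] [Module k T] [Module Λ T] [IsScalarTower k Λ T]

theorem exists_algHom_smul_eq_of_finrank_eq_one (h : finrank k S = 1) :
    ∃ χ : Λ →ₐ[k] k, ∀ (l : Λ) (y : S), l • y = χ l • y := by
  have hbij : Function.Bijective (algebraMap k (Module.End k S)) := by
    convert (LinearEquiv.smul_id_of_finrank_eq_one h).bijective using 1
    ext c y
    simp [Algebra.algebraMap_eq_smul_one]
  let scalars := AlgEquiv.ofBijective (Algebra.ofId k (Module.End k S)) hbij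
  refine ⟨scalars.symm.toAlgHom.comp (Algebra.lsmul k k S), fun l y => ?_⟩
  have hl : algebraMap k (Module.End k S) (scalars.symm (Algebra.lsmul k k S l)) =
      Algebra.lsmul k k S l :=
    scalars.apply_symm_apply _
  rw [AlgHom.comp_apply, ← Module.algebraMap_end_apply k k]
  exact (LinearMap.congr_fun hl y).symm

theorem smul_eq_algHom_smul_of_linearEquiv (f : S ≃ₗ[Λ] T) {χ : Λ →ₐ[k] k}
    (hχ : ∀ (l : Λ) (y : S), l • y = χ l • y) (l : Λ) (z : T) : l • z = χ l • z := by
  obtain ⟨y, rfl⟩ := f.surjective z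
  rw [← map_smul, hχ, ← algebraMap_smul Λ, map_smul, algebraMap_smul]

end Character

section SubQuot

variable {k Λ M : Type u} [Field k] [Ring Λ] [Algebra k Λ]
  [AddCommGroup M] [Module k M] [Module Λ M] [IsScalarTower k Λ M] {P Q : Submodule Λ M}

theorem subQuot_mk_eq_zero_iff {x : P} :
    (Submodule.Quotient.mk x : SubQuot P Q) = 0 ↔ (x : M) ∈ Q := by
  rw [Submodule.Quotient.mk_eq_zero, Submodule.mem_comap, Submodule.coe_subtype]

theorem exists_mem_notMem_of_finrank_subQuot_eq_one (h : finrank k (SubQuot P Q) = 1) :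
    ∃ x ∈ P, x ∉ Q := by
  have : Nontrivial (SubQuot P Q) := Module.nontrivial_of_finrank_eq_succ h
  obtain ⟨y, hy⟩ := exists_ne (0 : SubQuot P Q)
  obtain ⟨x, rfl⟩ := Submodule.Quotient.mk_surjective _ y
  exact ⟨x, x.2, fun hx => hy (subQuot_mk_eq_zero_iff.mpr hx)⟩

theorem exists_sub_smul_mem_of_finrank_subQuot_eq_one (h : finrank k (SubQuot P Q) = 1)
    {x y : M} (hx : x ∈ P) (hy : y ∈ P) (hyQ : y ∉ Q) : ∃ c : k, x - c • y ∈ Q := by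
  have hy0 : (Submodule.Quotient.mk ⟨y, hy⟩ : SubQuot P Q) ≠ 0 :=
    fun h0 => hyQ (subQuot_mk_eq_zero_iff.mp h0)
  obtain ⟨c, hc⟩ := exists_smul_eq_of_finrank_eq_one h hy0
    (Submodule.Quotient.mk ⟨x, hx⟩ : SubQuot P Q)
  refine ⟨c, ?_⟩
  rw [← Submodule.Quotient.mk_smul, ← sub_eq_zero, ← Submodule.Quotient.mk_sub,
    subQuot_mk_eq_zero_iff] at hc
  simpa using neg_mem hc

theorem smul_sub_smul_mem_of_subQuot {χ : Λ →ₐ[k] k}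
    (hχ : ∀ (l : Λ) (y : SubQuot P Q), l • y = χ l • y) (l : Λ) {x : M} (hx : x ∈ P) :
    l • x - χ l • x ∈ Q := by
  have h := hχ l (Submodule.Quotient.mk ⟨x, hx⟩)
  rw [← Submodule.Quotient.mk_smul, ← Submodule.Quotient.mk_smul, ← sub_eq_zero,
    ← Submodule.Quotient.mk_sub, subQuot_mk_eq_zero_iff] at h
  simpa using h

end SubQuot

namespace IsOrthogonalIdempotentSet

variable {Λ : Type u} [Ring Λ] {E : Set Λ} (hE : IsOrthogonalIdempotentSet Λ E)
include hE

theorem smul_smul_of_mem [DecidableEq Λ] {M : Type*} [AddCommGroup M] [Module Λ M] {e f : Λ}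
    (he : e ∈ E) (hf : f ∈ E) (x : M) : f • e • x = if f = e then e • x else 0 := by
  split_ifs with hfe
  · rw [hfe, smul_smul, hE.1 e he]
  · rw [smul_smul, hE.2 f hf e he hfe, zero_smul]

theorem smul_sum_smul [DecidableEq Λ] {M : Type*} [AddCommGroup M] [Module Λ M] {s : Finset Λ}
    (hs : ↑s ⊆ E) {f : Λ} (hf : f ∈ E) (x : M) :
    f • ∑ e ∈ s, e • x = if f ∈ s then f • x else 0 := by
  rw [Finset.smul_sum, Finset.sum_congr rfl fun e he => hE.smul_smul_of_mem (hs he) hf x,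
    Finset.sum_ite_eq]

theorem apply_eq_zero_of_apply_eq_one {R F : Type*} [MonoidWithZero R] [FunLike F Λ R]
    [MonoidWithZeroHomClass F Λ R] (χ : F) {e f : Λ} (he : e ∈ E) (hf : f ∈ E) (hfe : f ≠ e)
    (h : χ e = 1) : χ f = 0 := by
  rw [← mul_one (χ f), ← h, ← map_mul, hE.2 f hf e he hfe, map_zero]

theorem apply_eq_zero_or_eq_one {G₀ F : Type*} [MonoidWithZero G₀] [IsLeftCancelMulZero G₀]
    [FunLike F Λ G₀] [MulHomClass F Λ G₀] (χ : F) {e : Λ} (he : e ∈ E) : χ e = 0 ∨ χ e = 1 :=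
  IsIdempotentElem.iff_eq_zero_or_one.mp ((hE.1 e he).map χ)

variable {k M : Type*} [Field k] [Algebra k Λ] [AddCommGroup M] [Module k M] [Module Λ M]
  [IsScalarTower k Λ M]

theorem finite_setOf_smul_ne_zero [FiniteDimensional k M] (x : M) :
    {e ∈ E | e • x ≠ 0}.Finite := by
  classical
  have hli : LinearIndependent k fun e : {e ∈ E | e • x ≠ 0} => (e : Λ) • x := by
    rw [linearIndependent_iff']
    intro s g hg j hj
    have hproj : (j : Λ) • ∑ i ∈ s, g i • (i : Λ) • x = g j • (j : Λ) • x := by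
      simp only [Finset.smul_sum, smul_comm (j : Λ) (g _)]
      refine (Finset.sum_eq_single j (fun i _ hij => ?_) fun hjs => (hjs hj).elim).trans ?_
      · rw [hE.smul_smul_of_mem i.2.1 j.2.1, if_neg fun h => hij (Subtype.ext h).symm, smul_zero]
      · rw [hE.smul_smul_of_mem j.2.1 j.2.1, if_pos rfl]
    rw [hg, smul_zero] at hproj
    exact (smul_eq_zero.mp hproj.symm).resolve_right j.2.2
  exact Set.finite_coe_iff.mp hli.finite

theorem smul_sub_sum_smul_eq_zero [FiniteDimensional k M] (x : M) {f : Λ} (hf : f ∈ E) :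
    f • (x - ∑ e ∈ (hE.finite_setOf_smul_ne_zero (k := k) x).toFinset, e • x) = 0 := by
  classical
  rw [smul_sub, hE.smul_sum_smul (fun e he => by simp_all) hf]
  split_ifs with hfs
  · exact sub_self _
  · simp_all

theorem exists_eigenvector_mem_notMem [FiniteDimensional k M] {P Q : Submodule Λ M}
    {χ : Λ →ₐ[k] k} (hχ : ∀ (l : Λ) {x : M}, x ∈ P → l • x - χ l • x ∈ Q) {x : M} (hxP : x ∈ P)
    (hxQ : x ∉ Q) : ∃ v ∈ P, v ∉ Q ∧ ∀ e ∈ E, e • v = χ e • v := by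
  by_cases hone : ∃ e₀ ∈ E, χ e₀ = 1
  · obtain ⟨e₀, he₀, hχe₀⟩ := hone
    refine ⟨e₀ • x, P.smul_mem e₀ hxP, fun he₀x => hxQ ?_, fun f hf => ?_⟩
    · simpa [hχe₀] using sub_mem he₀x (hχ e₀ hxP)
    · classical
      rw [hE.smul_smul_of_mem he₀ hf]
      split_ifs with hfe
      · rw [hfe, hχe₀, one_smul]
      · rw [hE.apply_eq_zero_of_apply_eq_one χ he₀ hf hfe hχe₀, zero_smul]
  · have hχE : ∀ e ∈ E, χ e = 0 := fun e he =>
      (hE.apply_eq_zero_or_eq_one χ he).resolve_right fun h => hone ⟨e, he, h⟩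
    set s := (hE.finite_setOf_smul_ne_zero (k := k) x).toFinset
    refine ⟨x - ∑ e ∈ s, e • x, sub_mem hxP (sum_mem fun e _ => P.smul_mem e hxP),
      fun hv => hxQ ?_, fun f hf => ?_⟩
    · have hsum : ∑ e ∈ s, e • x ∈ Q := sum_mem fun e he => by
        simpa [hχE e (by simp_all [s])] using hχ e hxP
      simpa using add_mem hv hsum
    · rw [hE.smul_sub_sum_smul_eq_zero (k := k) x hf, hχE f hf, zero_smul]

end IsOrthogonalIdempotentSet

section ToMatrix

variable {R M ι : Type*} [CommRing R] [AddCommGroup M] [Module R M] [Fintype ι] [DecidableEq ι]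

theorem LinearMap.toMatrix_blockTriangular_of_mem_span [LinearOrder ι] (b : Module.Basis ι R M)
    {f : M →ₗ[R] M} (hf : ∀ j, f (b j) ∈ Submodule.span R (b '' Set.Iic j)) :
    (toMatrix b b f).BlockTriangular _root_.id := by
  intro i j hji
  rw [toMatrix_apply]
  by_contra h
  exact not_le.mpr hji (b.mem_span_image.mp (hf j) (Finsupp.mem_support_iff.mpr h))

theorem LinearMap.toMatrix_eq_diagonal_of_apply_eq_smul (b : Module.Basis ι R M)
    {f : M →ₗ[R] M} {c : ι → R} (hf : ∀ j, f (b j) = c j • b j) :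
    toMatrix b b f = Matrix.diagonal c := by
  ext i j
  rw [toMatrix_apply, hf, map_smul, b.repr_self, Matrix.diagonal_apply]
  by_cases h : i = j <;> simp [h]

end ToMatrix

theorem represents_toMatrixAlgEquiv_comp_lsmul {k Λ M : Type u} [Field k] [Ring Λ] [Algebra k Λ]
    [AddCommGroup M] [Module k M] [Module Λ M] [IsScalarTower k Λ M] {d : ℕ}
    (b : Module.Basis (Fin d) k M) :
    Represents ((LinearMap.toMatrixAlgEquiv b).toAlgHom.comp (Algebra.lsmul k k M (A := Λ)))
      M := by
  refine ⟨b.equivFun.symm, fun l w => ?_⟩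
  obtain ⟨x, rfl⟩ := b.equivFun.surjective w
  rw [LinearEquiv.symm_apply_apply, LinearEquiv.symm_apply_eq]
  exact LinearMap.toMatrix_mulVec_repr b b (Algebra.lsmul k k M l) x

section Flag

variable (k : Type u) {Λ M : Type u} [Field k] [Ring Λ] [Algebra k Λ]
  [AddCommGroup M] [Module k M] [Module Λ M] [IsScalarTower k Λ M] {d : ℕ}

structure IsCharacterFlag (F : Fin (d + 1) → Submodule Λ M) (χ : Fin d → Λ →ₐ[k] k) : Prop where
  bot : F 0 = ⊥
  top : F (Fin.last d) = ⊤
  finrank_subQuot : ∀ i : Fin d, finrank k (SubQuot (F i.succ) (F i.castSucc)) = 1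
  smul_subQuot :
    ∀ (i : Fin d) (l : Λ) (y : SubQuot (F i.succ) (F i.castSucc)), l • y = χ i l • y

variable {k}

namespace IsCharacterFlag

variable {F : Fin (d + 1) → Submodule Λ M} {χ : Fin d → Λ →ₐ[k] k} (hF : IsCharacterFlag k F χ)
include hF

theorem mem_span_image {v : Fin d → M} (hvF : ∀ i, v i ∈ F i.succ)
    (hvF' : ∀ i, v i ∉ F i.castSucc) (i : Fin (d + 1)) {x : M} (hx : x ∈ F i) :
    x ∈ Submodule.span k (v '' {j | j.castSucc < i}) := by
  induction i using Fin.induction generalizing x with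
  | zero =>
    rw [hF.bot, Submodule.mem_bot] at hx
    exact hx ▸ zero_mem _
  | succ i ih =>
    obtain ⟨c, hc⟩ :=
      exists_sub_smul_mem_of_finrank_subQuot_eq_one (hF.finrank_subQuot i) hx (hvF i) (hvF' i)
    have hmono : Submodule.span k (v '' {j | j.castSucc < i.castSucc}) ≤
        Submodule.span k (v '' {j | j.castSucc < i.succ}) :=
      Submodule.span_mono (Set.image_mono fun j hj => lt_trans hj Fin.castSucc_lt_succ)
    rw [← sub_add_cancel x (c • v i)]
    exact add_mem (hmono (ih hc))
      (Submodule.smul_mem _ c (Submodule.subset_span ⟨i, Fin.castSucc_lt_succ, rfl⟩))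

theorem exists_triangular_representation [FiniteDimensional k M] (hd : finrank k M = d)
    {E : Set Λ} (hE : IsOrthogonalIdempotentSet Λ E) :
    ∃ μ : Λ →ₐ[k] Matrix (Fin d) (Fin d) k, (∀ l : Λ, (μ l).BlockTriangular id) ∧
      Represents μ M ∧ ∀ e ∈ E, μ e = Matrix.diagonal fun i => χ i e := by
  have heigen (i : Fin d) : ∃ v ∈ F i.succ, v ∉ F i.castSucc ∧ ∀ e ∈ E, e • v = χ i e • v := by
    obtain ⟨x, hxF, hxF'⟩ := exists_mem_notMem_of_finrank_subQuot_eq_one (hF.finrank_subQuot i)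
    exact hE.exists_eigenvector_mem_notMem (smul_sub_smul_mem_of_subQuot (hF.smul_subQuot i))
      hxF hxF'
  choose v hvF hvF' hvE using heigen
  have hspan := hF.mem_span_image hvF hvF'
  have htop : ⊤ ≤ Submodule.span k (Set.range v) := fun x _ =>
    Submodule.span_mono (Set.image_subset_range _ _) (hspan _ (hF.top ▸ Submodule.mem_top))
  let b := basisOfTopLeSpanOfCardEqFinrank v htop (by simp [hd])
  have hb : ⇑b = v := coe_basisOfTopLeSpanOfCardEqFinrank v htop _
  refine ⟨(LinearMap.toMatrixAlgEquiv b).toAlgHom.comp (Algebra.lsmul k k M), fun l => ?_,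
    represents_toMatrixAlgEquiv_comp_lsmul b, fun e he => ?_⟩
  · refine LinearMap.toMatrix_blockTriangular_of_mem_span b fun j => ?_
    have hIic : {m : Fin d | m.castSucc < j.succ} = Set.Iic j := by ext; simp
    rw [hb, ← hIic]
    exact hspan j.succ ((F j.succ).smul_mem l (hvF j))
  · refine LinearMap.toMatrix_eq_diagonal_of_apply_eq_smul b fun j => ?_
    rw [hb]
    exact hvE j e he

end IsCharacterFlag

end Flag

theorem triangular_representations_of_compatible_composition_series_general
    (k : Type u) [Field k]
    (Λ : Type u) [Ring Λ] [Algebra k Λ]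
    (hbasic : ∀ (S : Type u) [AddCommGroup S] [Module k S] [Module Λ S] [IsScalarTower k Λ S],
      IsSimpleModule Λ S → Module.finrank k S = 1)
    (d : ℕ)
    (M : Type u) [AddCommGroup M] [Module k M] [Module Λ M] [IsScalarTower k Λ M]
    [FiniteDimensional k M] (hdimM : Module.finrank k M = d)
    (N : Type u) [AddCommGroup N] [Module k N] [Module Λ N] [IsScalarTower k Λ N]
    [FiniteDimensional k N] (hdimN : Module.finrank k N = d)
    (Mser : Fin (d + 1) → Submodule Λ M) (Nser : Fin (d + 1) → Submodule Λ N)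
    (hM0 : Mser 0 = ⊥) (hMtop : Mser (Fin.last d) = ⊤)
    (hMsimple : ∀ i : Fin d, IsSimpleModule Λ (SubQuot (Mser i.succ) (Mser i.castSucc)))
    (hN0 : Nser 0 = ⊥) (hNtop : Nser (Fin.last d) = ⊤)
    (hNsimple : ∀ i : Fin d, IsSimpleModule Λ (SubQuot (Nser i.succ) (Nser i.castSucc)))
    (hiso : ∀ i : Fin d, Nonempty
      (SubQuot (Mser i.succ) (Mser i.castSucc) ≃ₗ[Λ] SubQuot (Nser i.succ) (Nser i.castSucc))) :
    ∀ E : Set Λ, IsOrthogonalIdempotentSet Λ E →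
      ∃ μ ν : Λ →ₐ[k] Matrix (Fin d) (Fin d) k,
        (∀ l : Λ, (μ l).BlockTriangular id) ∧ (∀ l : Λ, (ν l).BlockTriangular id) ∧
        Represents μ M ∧ Represents ν N ∧ ∀ e ∈ E, μ e = ν e := by
  intro E hE
  have hfinM (i : Fin d) := hbasic _ (hMsimple i)
  choose χ hχ using fun i => exists_algHom_smul_eq_of_finrank_eq_one (Λ := Λ) (hfinM i)
  have hM : IsCharacterFlag k Mser χ := ⟨hM0, hMtop, hfinM, hχ⟩
  have hN : IsCharacterFlag k Nser χ := ⟨hN0, hNtop, fun i => hbasic _ (hNsimple i),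
    fun i => smul_eq_algHom_smul_of_linearEquiv (hiso i).some (hχ i)⟩
  obtain ⟨μ, hμ, hμM, hμE⟩ := hM.exists_triangular_representation hdimM hE
  obtain ⟨ν, hν, hνN, hνE⟩ := hN.exists_triangular_representation hdimN hE
  exact ⟨μ, ν, hμ, hν, hμM, hνN, fun e he => (hμE e he).trans (hνE e he).symm⟩

/-- if the `d`-dimensional modules `M` and `N` over a basic finite-dimensional
algebra `Λ` over an algebraically closed field admit composition series with isomorphic factors
in the same order, then for every orthogonal set `E` of idempotents of `Λ` there are triangular
representations `μ`, `ν` of `M`, `N` with `μ(e) = ν(e)` for all `e ∈ E`. -/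
theorem triangular_representations_of_compatible_composition_series
    (k : Type u) [Field k] [IsAlgClosed k]
    (Λ : Type u) [Ring Λ] [Algebra k Λ] [FiniteDimensional k Λ]
    (hbasic : ∀ (S : Type u) [AddCommGroup S] [Module k S] [Module Λ S] [IsScalarTower k Λ S],
      IsSimpleModule Λ S → Module.finrank k S = 1)
    (d : ℕ)
    (M : Type u) [AddCommGroup M] [Module k M] [Module Λ M] [IsScalarTower k Λ M]
    [FiniteDimensional k M] (hdimM : Module.finrank k M = d)
    (N : Type u) [AddCommGroup N] [Module k N] [Module Λ N] [IsScalarTower k Λ N]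
    [FiniteDimensional k N] (hdimN : Module.finrank k N = d)
    (Mser : Fin (d + 1) → Submodule Λ M) (Nser : Fin (d + 1) → Submodule Λ N)
    (hM0 : Mser 0 = ⊥) (hMtop : Mser (Fin.last d) = ⊤) (hMmono : Monotone Mser)
    (hMsimple : ∀ i : Fin d, IsSimpleModule Λ (SubQuot (Mser i.succ) (Mser i.castSucc)))
    (hN0 : Nser 0 = ⊥) (hNtop : Nser (Fin.last d) = ⊤) (hNmono : Monotone Nser)
    (hNsimple : ∀ i : Fin d, IsSimpleModule Λ (SubQuot (Nser i.succ) (Nser i.castSucc)))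
    (hiso : ∀ i : Fin d, Nonempty
      (SubQuot (Mser i.succ) (Mser i.castSucc) ≃ₗ[Λ] SubQuot (Nser i.succ) (Nser i.castSucc))) :
    ∀ E : Set Λ, IsOrthogonalIdempotentSet Λ E →
      ∃ μ ν : Λ →ₐ[k] Matrix (Fin d) (Fin d) k,
        (∀ l : Λ, (μ l).BlockTriangular id) ∧ (∀ l : Λ, (ν l).BlockTriangular id) ∧
        Represents μ M ∧ Represents ν N ∧ ∀ e ∈ E, μ e = ν e :=
  triangular_representations_of_compatible_composition_series_general k Λ hbasic d M hdimM N hdimN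
    Mser Nser hM0 hMtop hMsimple hN0 hNtop hNsimple hiso
end

section
/- Let Λ be a finite-dimensional algebra over a field k. Let M_1 ↪ M_2 ↪ ⋯ ↪ M_d (with injective maps i_1, …, i_{d-1}) and N_1 ↪ N_2 ↪ ⋯ ↪ N_d (with injective maps j_1, …, j_{d-1}) be chains of finite-dimensional Λ-modules. Suppose there exist Λ-modules X_1, …, X_d, homomorphisms h_n : X_n → X_{n+1}, and a commutative diagram whose columns are short exact sequences 0 → X_n → X_n ⊕ M_n → N_n → 0 (for 1 ≤ n ≤ d), where the horizontal maps between the middle rows are h_n ⊕ i_n and between the bottom rows are j_n. Then there exist Λ-modules X'_1, …, X'_d, INJECTIVE homomorphisms h'_n : X'_n → X'_{n+1}, and a commutative diagram of the same shape with exact columns 0 → X'_n → X'_n ⊕ M_n → N_n → 0, horizontal middle maps h'_n ⊕ i_n and bottom maps j_n. -/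
universe u v

/-!
Quotient each `X n` by the kernel `K n` of the composite `X n → X d`; then the induced
`h' n` are injective, as `K n` is the preimage of `K (n + 1)`. Injectivity of the `i n` forces
`α n` to send `K n` into `K n × 0`. As `K n` has finite length, the injective map `α n` then
sends `K n` onto `K n × 0`, so `K n × 0 ⊆ ker (β n)` and each column descends to an exact
column `X n ⧸ K n → (X n ⧸ K n) × M n → N n`.
-/

open Function Submodule
open LinearMap (ker range)

namespace Submodule

section QuotientColumn

variable {R : Type*} [Ring R] {X M N X₂ M₂ N₂ : Type*}
  [AddCommGroup X] [Module R X] [AddCommGroup M] [Module R M] [AddCommGroup N] [Module R N]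
  [AddCommGroup X₂] [Module R X₂] [AddCommGroup M₂] [Module R M₂]
  [AddCommGroup N₂] [Module R N₂]

def quotientColumnLeft (K : Submodule R X) (α : X →ₗ[R] X × M) (hK : K.map α ≤ K.prod ⊥) :
    X ⧸ K →ₗ[R] (X ⧸ K) × M :=
  (K.mapQ K (LinearMap.fst R X M ∘ₗ α) fun _ hx => (mem_prod.1 (hK (mem_map_of_mem hx))).1).prod
    (K.liftQ (LinearMap.snd R X M ∘ₗ α) fun _ hx =>
      (mem_bot R).1 (mem_prod.1 (hK (mem_map_of_mem hx))).2)

@[simp]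
theorem quotientColumnLeft_mk (K : Submodule R X) (α : X →ₗ[R] X × M)
    (hK : K.map α ≤ K.prod ⊥) (x : X) :
    K.quotientColumnLeft α hK (Quotient.mk x) = (Quotient.mk (α x).1, (α x).2) :=
  rfl

def quotientColumnRight (K : Submodule R X) (β : X × M →ₗ[R] N) (hK : K.prod ⊥ ≤ ker β) :
    (X ⧸ K) × M →ₗ[R] N :=
  (K.liftQ (β ∘ₗ LinearMap.inl R X M) fun _ hx => hK (mem_prod.2 ⟨hx, zero_mem _⟩)).coprod
    (β ∘ₗ LinearMap.inr R X M)

@[simp]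
theorem quotientColumnRight_mk (K : Submodule R X) (β : X × M →ₗ[R] N)
    (hK : K.prod ⊥ ≤ ker β) (x : X) (m : M) :
    K.quotientColumnRight β hK (Quotient.mk x, m) = β (x, m) := by
  change β (x, 0) + β (0, m) = β (x, m)
  rw [← map_add, Prod.mk_add_mk, add_zero, zero_add]

theorem prod_bot_le_ker_of_map_eq {K : Submodule R X} {α : X →ₗ[R] X × M}
    {β : X × M →ₗ[R] N} (hαβ : range α = ker β) (hK : K.map α = K.prod ⊥) :
    K.prod ⊥ ≤ ker β :=
  hK ▸ hαβ ▸ LinearMap.map_le_range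

theorem quotientColumn_exact {K : Submodule R X} {α : X →ₗ[R] X × M} {β : X × M →ₗ[R] N}
    (hα : Injective α) (hβ : Surjective β) (hαβ : range α = ker β)
    (hK : K.map α = K.prod ⊥) :
    Injective (K.quotientColumnLeft α hK.le) ∧
      Surjective (K.quotientColumnRight β (prod_bot_le_ker_of_map_eq hαβ hK)) ∧
      range (K.quotientColumnLeft α hK.le) =
        ker (K.quotientColumnRight β (prod_bot_le_ker_of_map_eq hαβ hK)) := by
  refine ⟨?_, fun n => ?_, le_antisymm ?_ ?_⟩
  · refine (injective_iff_map_eq_zero _).2 fun a ha => ?_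
    obtain ⟨x, rfl⟩ := Quotient.mk_surjective _ a
    have hαx : α x ∈ K.map α := by
      rw [hK, mem_prod]
      simpa [Prod.ext_iff] using ha
    obtain ⟨u, hu, hux⟩ := hαx
    rwa [Quotient.mk_eq_zero, ← hα hux]
  · obtain ⟨⟨x, m⟩, rfl⟩ := hβ n
    exact ⟨(Quotient.mk x, m), quotientColumnRight_mk ..⟩
  · rintro _ ⟨a, rfl⟩
    obtain ⟨x, rfl⟩ := Quotient.mk_surjective _ a
    rw [LinearMap.mem_ker, quotientColumnLeft_mk, quotientColumnRight_mk, Prod.mk.eta,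
      ← LinearMap.mem_ker, ← hαβ]
    exact LinearMap.mem_range_self α x
  · rintro ⟨a, m⟩ ha
    obtain ⟨x, rfl⟩ := Quotient.mk_surjective _ a
    rw [LinearMap.mem_ker, quotientColumnRight_mk, ← LinearMap.mem_ker, ← hαβ] at ha
    obtain ⟨u, hu⟩ := ha
    exact ⟨Quotient.mk u, by rw [quotientColumnLeft_mk, hu]⟩

theorem quotientColumnLeft_square {K : Submodule R X} {K₂ : Submodule R X₂}
    {h : X →ₗ[R] X₂} (hKK₂ : K ≤ K₂.comap h) (i : M →ₗ[R] M₂) {α : X →ₗ[R] X × M}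
    {α₂ : X₂ →ₗ[R] X₂ × M₂} (hK : K.map α ≤ K.prod ⊥) (hK₂ : K₂.map α₂ ≤ K₂.prod ⊥)
    (hsq : (h.prodMap i) ∘ₗ α = α₂ ∘ₗ h) :
    ((K.mapQ K₂ h hKK₂).prodMap i) ∘ₗ K.quotientColumnLeft α hK =
      K₂.quotientColumnLeft α₂ hK₂ ∘ₗ K.mapQ K₂ h hKK₂ := by
  refine linearMap_qext _ (LinearMap.ext fun x => ?_)
  have hx := LinearMap.congr_fun hsq x
  simp only [LinearMap.comp_apply, LinearMap.prodMap_apply, Prod.ext_iff] at hx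
  simp [hx.1, hx.2]

theorem quotientColumnRight_square {K : Submodule R X} {K₂ : Submodule R X₂}
    {h : X →ₗ[R] X₂} (hKK₂ : K ≤ K₂.comap h) (i : M →ₗ[R] M₂) (j : N →ₗ[R] N₂)
    {β : X × M →ₗ[R] N} {β₂ : X₂ × M₂ →ₗ[R] N₂} (hK : K.prod ⊥ ≤ ker β)
    (hK₂ : K₂.prod ⊥ ≤ ker β₂) (hsq : β₂ ∘ₗ h.prodMap i = j ∘ₗ β) :
    K₂.quotientColumnRight β₂ hK₂ ∘ₗ (K.mapQ K₂ h hKK₂).prodMap i =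
      j ∘ₗ K.quotientColumnRight β hK := by
  refine LinearMap.ext fun ⟨a, m⟩ => ?_
  obtain ⟨x, rfl⟩ := Quotient.mk_surjective _ a
  simpa using LinearMap.congr_fun hsq (x, m)

theorem map_comap_le_prod_bot {h : X →ₗ[R] X₂} {i : M →ₗ[R] M₂} (hi : Injective i)
    {α : X →ₗ[R] X × M} {α₂ : X₂ →ₗ[R] X₂ × M₂} (hsq : (h.prodMap i) ∘ₗ α = α₂ ∘ₗ h)
    {K₂ : Submodule R X₂} (hK₂ : K₂.map α₂ ≤ K₂.prod ⊥) :
    (K₂.comap h).map α ≤ (K₂.comap h).prod ⊥ := by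
  rintro _ ⟨x, hx, rfl⟩
  have hαhx := hK₂ (mem_map_of_mem (f := α₂) hx)
  rw [← LinearMap.comp_apply, ← hsq, LinearMap.comp_apply, LinearMap.prodMap_apply, mem_prod,
    mem_bot, map_eq_zero_iff i hi] at hαhx
  exact mem_prod.2 ⟨hαhx.1, (mem_bot R).2 hαhx.2⟩

theorem map_eq_prod_bot_of_isArtinian {α : X →ₗ[R] X × M} (hα : Injective α)
    {K : Submodule R X} [IsArtinian R K] (hK : K.map α ≤ K.prod ⊥) :
    K.map α = K.prod ⊥ := by
  have hKα : ∀ x ∈ K, (α x).1 ∈ K ∧ (α x).2 = 0 := fun x hx =>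
    (mem_prod.1 (hK (mem_map_of_mem hx))).imp id (mem_bot R).1
  let e : K →ₗ[R] K := (LinearMap.fst R X M ∘ₗ α).restrict fun x hx => (hKα x hx).1
  have he : Injective e := fun a b hab => Subtype.ext <| hα <|
    Prod.ext (congrArg Subtype.val hab) (((hKα a a.2).2).trans (hKα b b.2).2.symm)
  refine hK.antisymm fun ⟨x, m⟩ hxm => ?_
  obtain ⟨hx, hm⟩ := mem_prod.1 hxm
  obtain ⟨u, hu⟩ := IsArtinian.surjective_of_injective_endomorphism e he ⟨x, hx⟩
  refine ⟨u, u.2, Prod.ext (congrArg Subtype.val hu) ?_⟩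
  rw [(hKα u u.2).2, (mem_bot R).1 hm]

end QuotientColumn

section Chain

variable {R : Type*} [Ring R] {d : ℕ} {X M : Fin (d + 1) → Type*}
  [∀ n, AddCommGroup (X n)] [∀ n, Module R (X n)] [∀ n, AddCommGroup (M n)]
  [∀ n, Module R (M n)]

-- The kernel of the composite `X n → X (Fin.last d)` of the maps `h`.
def kerToLast (h : ∀ n : Fin d, X n.castSucc →ₗ[R] X n.succ) : ∀ n, Submodule R (X n) :=
  Fin.reverseInduction (motive := fun n => Submodule R (X n)) ⊥ fun n K => K.comap (h n)

theorem kerToLast_castSucc (h : ∀ n : Fin d, X n.castSucc →ₗ[R] X n.succ) (n : Fin d) :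
    kerToLast h n.castSucc = (kerToLast h n.succ).comap (h n) :=
  Fin.reverseInduction_castSucc n

theorem kerToLast_map_le_prod_bot {h : ∀ n : Fin d, X n.castSucc →ₗ[R] X n.succ}
    {i : ∀ n : Fin d, M n.castSucc →ₗ[R] M n.succ} (hi : ∀ n, Injective (i n))
    {α : ∀ n, X n →ₗ[R] X n × M n}
    (hsq : ∀ n : Fin d, ((h n).prodMap (i n)) ∘ₗ α n.castSucc = α n.succ ∘ₗ h n) (n) :
    (kerToLast h n).map (α n) ≤ (kerToLast h n).prod ⊥ := by
  induction n using Fin.reverseInduction with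
  | last =>
    rw [kerToLast, Fin.reverseInduction_last, map_bot]
    exact bot_le
  | cast n ih =>
    rw [kerToLast_castSucc]
    exact map_comap_le_prod_bot (hi n) (hsq n) ih

end Chain

end Submodule

theorem riedtmann_diagram_monic_general
    (k : Type u) [Field k]
    (Λ : Type u) [Ring Λ] [Algebra k Λ] [FiniteDimensional k Λ]
    (d : ℕ)
    (M N X : Fin (d + 1) → Type v)
    [∀ n, AddCommGroup (M n)] [∀ n, Module Λ (M n)]
    [∀ n, AddCommGroup (N n)] [∀ n, Module Λ (N n)]
    [∀ n, AddCommGroup (X n)] [∀ n, Module Λ (X n)] [∀ n, Module.Finite Λ (X n)]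
    (i : ∀ n : Fin d, M n.castSucc →ₗ[Λ] M n.succ) (hi : ∀ n, Function.Injective (i n))
    (j : ∀ n : Fin d, N n.castSucc →ₗ[Λ] N n.succ)
    (h : ∀ n : Fin d, X n.castSucc →ₗ[Λ] X n.succ)
    (α : ∀ n : Fin (d + 1), X n →ₗ[Λ] X n × M n)
    (β : ∀ n : Fin (d + 1), X n × M n →ₗ[Λ] N n)
    (hexact : ∀ n : Fin (d + 1), Function.Injective (α n) ∧ Function.Surjective (β n) ∧
      LinearMap.range (α n) = LinearMap.ker (β n))
    (hsquare₁ : ∀ n : Fin d,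
      (LinearMap.prodMap (h n) (i n)).comp (α n.castSucc) = (α n.succ).comp (h n))
    (hsquare₂ : ∀ n : Fin d,
      (β n.succ).comp (LinearMap.prodMap (h n) (i n)) = (j n).comp (β n.castSucc)) :
    ∃ (X' : Fin (d + 1) → Type v)
      (_ : ∀ n, AddCommGroup (X' n)) (_ : ∀ n, Module Λ (X' n)),
      (∀ n, Module.Finite Λ (X' n)) ∧
      ∃ (h' : ∀ n : Fin d, X' n.castSucc →ₗ[Λ] X' n.succ)
        (α' : ∀ n : Fin (d + 1), X' n →ₗ[Λ] X' n × M n)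
        (β' : ∀ n : Fin (d + 1), X' n × M n →ₗ[Λ] N n),
        (∀ n : Fin d, Function.Injective (h' n)) ∧
        (∀ n : Fin (d + 1), Function.Injective (α' n) ∧ Function.Surjective (β' n) ∧
          LinearMap.range (α' n) = LinearMap.ker (β' n)) ∧
        (∀ n : Fin d,
          (LinearMap.prodMap (h' n) (i n)).comp (α' n.castSucc) = (α' n.succ).comp (h' n)) ∧
        (∀ n : Fin d,
          (β' n.succ).comp (LinearMap.prodMap (h' n) (i n)) = (j n).comp (β' n.castSucc)) := by
  have : IsArtinianRing Λ := IsArtinianRing.of_finite k Λ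
  let K := kerToLast h
  have hKh : ∀ n : Fin d, K n.castSucc = (K n.succ).comap (h n) := kerToLast_castSucc h
  have hK : ∀ n, (K n).map (α n) = (K n).prod ⊥ := fun n =>
    map_eq_prod_bot_of_isArtinian (hexact n).1 (kerToLast_map_le_prod_bot hi hsquare₁ n)
  have hKβ : ∀ n, (K n).prod ⊥ ≤ LinearMap.ker (β n) := fun n =>
    prod_bot_le_ker_of_map_eq (hexact n).2.2 (hK n)
  refine ⟨fun n => X n ⧸ K n, inferInstance, inferInstance, inferInstance,
    fun n => (K n.castSucc).mapQ (K n.succ) (h n) (hKh n).le,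
    fun n => (K n).quotientColumnLeft (α n) (hK n).le,
    fun n => (K n).quotientColumnRight (β n) (hKβ n),
    fun n => ?_, fun n => quotientColumn_exact (hexact n).1 (hexact n).2.1 (hexact n).2.2 (hK n),
    fun n => quotientColumnLeft_square _ (i n) _ _ (hsquare₁ n),
    fun n => quotientColumnRight_square _ (i n) (j n) _ _ (hsquare₂ n)⟩
  rw [← LinearMap.ker_eq_bot, ker_mapQ, ← hKh n, mkQ_map_self]

/-- given chains of finite-dimensional `Λ`-modules `M_1 ↪ ⋯ ↪ M_d` (maps `i_n`,
injective) and `N_1 ↪ ⋯ ↪ N_d` (maps `j_n`, injective), together with modules `X_n`, maps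
`h_n : X_n → X_{n+1}` and a commutative diagram with exact columns
`0 → X_n → X_n ⊕ M_n → N_n → 0` (horizontal middle maps `h_n ⊕ i_n`, bottom maps `j_n`),
there exist modules `X'_n`, *injective* maps `h'_n : X'_n → X'_{n+1}` and a commutative diagram
of the same shape with exact columns `0 → X'_n → X'_n ⊕ M_n → N_n → 0`. -/
theorem riedtmann_diagram_monic
    (k : Type u) [Field k]
    (Λ : Type u) [Ring Λ] [Algebra k Λ] [FiniteDimensional k Λ]
    (d : ℕ)
    (M N X : Fin (d + 1) → Type v)
    [∀ n, AddCommGroup (M n)] [∀ n, Module Λ (M n)] [∀ n, Module.Finite Λ (M n)]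
    [∀ n, AddCommGroup (N n)] [∀ n, Module Λ (N n)] [∀ n, Module.Finite Λ (N n)]
    [∀ n, AddCommGroup (X n)] [∀ n, Module Λ (X n)] [∀ n, Module.Finite Λ (X n)]
    (i : ∀ n : Fin d, M n.castSucc →ₗ[Λ] M n.succ) (hi : ∀ n, Function.Injective (i n))
    (j : ∀ n : Fin d, N n.castSucc →ₗ[Λ] N n.succ) (hj : ∀ n, Function.Injective (j n))
    (h : ∀ n : Fin d, X n.castSucc →ₗ[Λ] X n.succ)
    (α : ∀ n : Fin (d + 1), X n →ₗ[Λ] X n × M n)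
    (β : ∀ n : Fin (d + 1), X n × M n →ₗ[Λ] N n)
    (hexact : ∀ n : Fin (d + 1), Function.Injective (α n) ∧ Function.Surjective (β n) ∧
      LinearMap.range (α n) = LinearMap.ker (β n))
    (hsquare₁ : ∀ n : Fin d,
      (LinearMap.prodMap (h n) (i n)).comp (α n.castSucc) = (α n.succ).comp (h n))
    (hsquare₂ : ∀ n : Fin d,
      (β n.succ).comp (LinearMap.prodMap (h n) (i n)) = (j n).comp (β n.castSucc)) :
    ∃ (X' : Fin (d + 1) → Type v)
      (_ : ∀ n, AddCommGroup (X' n)) (_ : ∀ n, Module Λ (X' n)),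
      (∀ n, Module.Finite Λ (X' n)) ∧
      ∃ (h' : ∀ n : Fin d, X' n.castSucc →ₗ[Λ] X' n.succ)
        (α' : ∀ n : Fin (d + 1), X' n →ₗ[Λ] X' n × M n)
        (β' : ∀ n : Fin (d + 1), X' n × M n →ₗ[Λ] N n),
        (∀ n : Fin d, Function.Injective (h' n)) ∧
        (∀ n : Fin (d + 1), Function.Injective (α' n) ∧ Function.Surjective (β' n) ∧
          LinearMap.range (α' n) = LinearMap.ker (β' n)) ∧
        (∀ n : Fin d,
          (LinearMap.prodMap (h' n) (i n)).comp (α' n.castSucc) = (α' n.succ).comp (h' n)) ∧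
        (∀ n : Fin d,
          (β' n.succ).comp (LinearMap.prodMap (h' n) (i n)) = (j n).comp (β' n.castSucc)) :=
  riedtmann_diagram_monic_general k Λ d M N X i hi j h α β hexact hsquare₁ hsquare₂
end
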